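/- arXiv:2112.05431 — 6 statements merged into one kernel-verified Lean document; each statement's English description precedes it below -/
import Mathlib

section
/- There is an absolute constant C > 0 such that for every α ∈ (0,1), every integer n ≥ 1, every integer d ≥ 1 and every r ∈ ℤ: |Σ_{0 ≤ l ≤ n, l ≡ r (mod d)} C(n,l)·α^l·(1−α)^{n−l} − 1/d| ≤ C/(√(α(1−α))·√n). -/
/-!
Roots-of-unity filter: with `ζ = exp (2πi/d)`,
`d · ∑_{l ≡ r} C(n,l) α^l (1-α)^(n-l) = ∑_{j<d} ζ^(-rj) (α ζ^j + 1 - α)^n`,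
and the `j = 0` term is `1`. Since `|α z + 1 - α|² = 1 - 2α(1-α)(1 - Re z)` on the unit
circle and `1 - cos (2πj/d) ≥ 8 min(j, d-j)² / d²`, the `j`-th term is at most
`exp (-8nα(1-α) min(j, d-j)² / d²)`. Comparing this Gaussian sum with
`∫₀^∞ exp (-b x²) dx = √(π/b)/2` bounds the error by `√(π / (8nα(1-α)))`,
so `C = 1` works.
-/

open Finset Real

theorem IsPrimitiveRoot.geom_sum_zpow_eq_ite {K : Type*} [Field K] {ζ : K} {d : ℕ}
    (hζ : IsPrimitiveRoot ζ d) (m : ℤ) :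
    ∑ j ∈ range d, (ζ ^ m) ^ j = if (d : ℤ) ∣ m then (d : K) else 0 := by
  split_ifs with hdvd
  · simp [(hζ.zpow_eq_one_iff_dvd m).2 hdvd]
  · have hne : ζ ^ m ≠ 1 := mt (hζ.zpow_eq_one_iff_dvd m).1 hdvd
    rw [geom_sum_eq hne, ← zpow_natCast, ← zpow_mul, mul_comm, zpow_mul, zpow_natCast,
      hζ.pow_eq_one, one_zpow, sub_self, zero_div]

theorem IsPrimitiveRoot.natCast_mul_sum_filter_intModEq {K : Type*} [Field K] {ζ : K} {d : ℕ}
    (hζ : IsPrimitiveRoot ζ d) (s : Finset ℕ) (f : ℕ → K) (r : ℤ) :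
    (d : K) * ∑ l ∈ s.filter (fun l : ℕ => (l : ℤ) ≡ r [ZMOD d]), f l =
      ∑ j ∈ range d, ∑ l ∈ s, f l * (ζ ^ ((l : ℤ) - r)) ^ j := by
  simp_rw [sum_comm (s := range d), ← mul_sum, hζ.geom_sum_zpow_eq_ite, mul_sum, sum_filter,
    Int.modEq_comm, Int.modEq_iff_dvd]
  refine sum_congr rfl fun l _ => ?_
  split_ifs <;> ring

theorem IsPrimitiveRoot.natCast_mul_sum_filter_binomial {K : Type*} [Field K] {ζ : K} {d : ℕ}
    (hζ : IsPrimitiveRoot ζ d) (α : K) (n : ℕ) (r : ℤ) :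
    (d : K) * ∑ l ∈ (range (n + 1)).filter (fun l : ℕ => (l : ℤ) ≡ r [ZMOD d]),
        (n.choose l : K) * α ^ l * (1 - α) ^ (n - l) =
      ∑ j ∈ range d, (ζ ^ (-r)) ^ j * (α * ζ ^ j + (1 - α)) ^ n := by
  rw [hζ.natCast_mul_sum_filter_intModEq]
  refine sum_congr rfl fun j hj => ?_
  have hζ0 : ζ ≠ 0 := hζ.ne_zero (by rintro rfl; simp at hj)
  rw [add_pow, mul_sum]
  refine sum_congr rfl fun l _ => ?_
  rw [zpow_sub₀ hζ0, zpow_natCast, div_eq_mul_inv, ← zpow_neg, mul_pow, mul_pow, ← pow_mul,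
    mul_comm l j, pow_mul]
  ring

theorem Complex.norm_ofReal_mul_add_one_sub_le {z : ℂ} (hz : ‖z‖ = 1) (α : ℝ) :
    ‖(α : ℂ) * z + (1 - α)‖ ≤ Real.exp (-(α * (1 - α) * (1 - z.re))) := by
  have hz2 : z.re * z.re + z.im * z.im = 1 := by
    rw [← Complex.normSq_apply, ← Complex.sq_norm, hz, one_pow]
  have hsq : ‖(α : ℂ) * z + (1 - α)‖ ^ 2 = 1 - 2 * (α * (1 - α) * (1 - z.re)) := by
    rw [Complex.sq_norm, Complex.normSq_apply]
    simp only [Complex.add_re, Complex.add_im, Complex.mul_re, Complex.mul_im, Complex.ofReal_re,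
      Complex.ofReal_im, Complex.sub_re, Complex.sub_im, Complex.one_re, Complex.one_im]
    linear_combination α * α * hz2
  refine (pow_le_pow_iff_left₀ (norm_nonneg _) (Real.exp_pos _).le two_ne_zero).1 ?_
  rw [hsq, ← Real.exp_nat_mul, Nat.cast_ofNat]
  linarith [Real.add_one_le_exp (2 * -(α * (1 - α) * (1 - z.re)))]

theorem eight_mul_sq_le_one_sub_cos {y : ℝ} (hy : |y| ≤ 1 / 2) :
    8 * y ^ 2 ≤ 1 - cos (2 * π * y) := by
  have hx : |2 * π * y| ≤ π := by
    rw [abs_mul, abs_of_pos (by positivity)]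
    nlinarith [pi_pos]
  have := cos_le_one_sub_mul_cos_sq hx
  have : 2 / π ^ 2 * (2 * π * y) ^ 2 = 8 * y ^ 2 := by field_simp; ring
  linarith

theorem exp_neg_mul_one_sub_cos_le {t : ℝ} (ht : 0 ≤ t) {d j : ℕ} (hjd : j < d) :
    exp (-(t * (1 - cos (2 * π * j / d)))) ≤
      exp (-(8 * t / d ^ 2) * j ^ 2) + exp (-(8 * t / d ^ 2) * (d - j : ℕ) ^ 2) := by
  have hd : (0 : ℝ) < d := by exact_mod_cast (Nat.zero_le j).trans_lt hjd
  have hjd' : (j : ℝ) < d := by exact_mod_cast hjd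
  -- `cos (2π ·)` is 1-periodic, and one of `j/d`, `j/d - 1` lies in `[-1/2, 1/2]`.
  have key : ∀ y : ℝ, |y| ≤ 1 / 2 → cos (2 * π * y) = cos (2 * π * j / d) →
      exp (-(t * (1 - cos (2 * π * j / d)))) ≤ exp (-(8 * t * y ^ 2)) := fun y hy hcos =>
    exp_le_exp.2 <| by nlinarith [eight_mul_sq_le_one_sub_cos hy]
  rcases le_total (2 * j) d with h | h
  · have hy : |(j / d : ℝ)| ≤ 1 / 2 := by
      rw [abs_of_nonneg (by positivity), div_le_iff₀ hd]
      linarith [show (2 * j : ℝ) ≤ d by exact_mod_cast h]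
    refine (key _ hy (by rw [mul_div_assoc])).trans
      (le_add_of_le_of_nonneg (le_of_eq ?_) (exp_pos _).le)
    congr 1
    field_simp
  · have hy : |(j / d - 1 : ℝ)| ≤ 1 / 2 := by
      rw [abs_le, div_sub_one hd.ne', le_div_iff₀ hd, div_le_iff₀ hd]
      constructor <;> linarith [show (d : ℝ) ≤ 2 * j by exact_mod_cast h]
    have hcos : cos (2 * π * (j / d - 1)) = cos (2 * π * j / d) := by
      rw [mul_sub, mul_one, cos_sub_two_pi, mul_div_assoc]
    refine (key _ hy hcos).trans (le_add_of_nonneg_of_le (exp_pos _).le (le_of_eq ?_))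
    rw [Nat.cast_sub hjd.le]
    congr 1
    field_simp
    ring

theorem sum_range_exp_neg_mul_sq_le {b : ℝ} (hb : 0 < b) (N : ℕ) :
    ∑ m ∈ range N, exp (-b * (m + 1 : ℕ) ^ 2) ≤ √(π / b) / 2 := by
  have hanti : AntitoneOn (fun x : ℝ => exp (-b * x ^ 2)) (Set.Icc 0 (0 + N)) := by
    intro x hx y _ hxy
    have := mul_le_mul_of_nonneg_left (pow_le_pow_left₀ hx.1 hxy 2) hb.le
    exact exp_le_exp.2 (by linarith)
  have hint : MeasureTheory.IntegrableOn (fun x : ℝ => exp (-b * x ^ 2)) (Set.Ioi 0) :=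
    (integrable_exp_neg_mul_sq hb).integrableOn
  calc ∑ m ∈ range N, exp (-b * (m + 1 : ℕ) ^ 2)
      = ∑ m ∈ range N, exp (-b * (0 + ((m + 1 : ℕ) : ℝ)) ^ 2) := by simp
    _ ≤ ∫ x in (0 : ℝ)..0 + N, exp (-b * x ^ 2) := hanti.sum_le_integral
    _ ≤ ∫ x in Set.Ioi 0, exp (-b * x ^ 2) := by
      rw [intervalIntegral.integral_of_le (by positivity)]
      exact MeasureTheory.setIntegral_mono_set hint
        (Filter.Eventually.of_forall fun x => (exp_pos _).le) Set.Ioc_subset_Ioi_self.eventuallyLE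
    _ = √(π / b) / 2 := integral_gaussian_Ioi b

theorem sum_Ico_exp_neg_mul_one_sub_cos_le {t : ℝ} (ht : 0 < t) (d : ℕ) :
    ∑ j ∈ Ico 1 d, exp (-(t * (1 - cos (2 * π * j / d)))) ≤ d * √(π / (8 * t)) := by
  rcases Nat.eq_zero_or_pos d with rfl | hd
  · simp
  have hd' : (0 : ℝ) < d := by exact_mod_cast hd
  set b := 8 * t / d ^ 2 with hb
  have hb0 : 0 < b := by positivity
  have hgauss : ∑ j ∈ Ico 1 d, exp (-b * j ^ 2) ≤ √(π / b) / 2 := by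
    rw [sum_Ico_eq_sum_range]
    simpa only [add_comm 1] using sum_range_exp_neg_mul_sq_le hb0 (d - 1)
  have hreflect :
      ∑ j ∈ Ico 1 d, exp (-b * (d - j : ℕ) ^ 2) = ∑ j ∈ Ico 1 d, exp (-b * j ^ 2) := by
    rw [sum_Ico_reflect (fun j => exp (-b * (j : ℝ) ^ 2)) 1 (Nat.le_succ d)]
    simp
  calc ∑ j ∈ Ico 1 d, exp (-(t * (1 - cos (2 * π * j / d))))
      ≤ ∑ j ∈ Ico 1 d, (exp (-b * j ^ 2) + exp (-b * (d - j : ℕ) ^ 2)) :=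
        sum_le_sum fun j hj => exp_neg_mul_one_sub_cos_le ht.le (mem_Ico.1 hj).2
    _ ≤ √(π / b) := by rw [sum_add_distrib, hreflect]; linarith
    _ = d * √(π / (8 * t)) := by
        rw [show π / b = d ^ 2 * (π / (8 * t)) by rw [hb]; field_simp, sqrt_mul (sq_nonneg _),
          sqrt_sq hd'.le]

theorem natCast_mul_abs_sum_filter_binomial_sub_one_div_le (α : ℝ) (n : ℕ) {d : ℕ}
    (hd : 0 < d) (r : ℤ) :
    d * |(∑ l ∈ (range (n + 1)).filter (fun l : ℕ => (l : ℤ) ≡ r [ZMOD d]),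
        (n.choose l : ℝ) * α ^ l * (1 - α) ^ (n - l)) - 1 / d| ≤
      ∑ j ∈ Ico 1 d, exp (-(n * (α * (1 - α)) * (1 - cos (2 * π * j / d)))) := by
  set S := ∑ l ∈ (range (n + 1)).filter (fun l : ℕ => (l : ℤ) ≡ r [ZMOD d]),
    (n.choose l : ℝ) * α ^ l * (1 - α) ^ (n - l) with hS_def
  set ζ := Complex.exp (2 * π * Complex.I / d)
  have hζ : IsPrimitiveRoot ζ d := Complex.isPrimitiveRoot_exp d hd.ne'
  have hζj : ∀ j : ℕ, ζ ^ j = Complex.exp ((2 * π * j / d : ℝ) * Complex.I) := fun j => by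
    rw [← Complex.exp_nat_mul]
    push_cast
    ring_nf
  have hnorm : ‖ζ‖ = 1 := by rw [← pow_one ζ, hζj, Complex.norm_exp_ofReal_mul_I]
  set g : ℕ → ℂ := fun j => (ζ ^ (-r)) ^ j * (α * ζ ^ j + (1 - α)) ^ n
  have hfourier : (d : ℂ) * (S - 1 / d : ℝ) = ∑ j ∈ Ico 1 d, g j := by
    have hS : (d : ℂ) * S = ∑ j ∈ range d, g j := by
      rw [← hζ.natCast_mul_sum_filter_binomial, hS_def]
      push_cast
      rfl
    rw [Complex.ofReal_sub, mul_sub, hS, range_eq_Ico, sum_eq_sum_Ico_succ_bot hd,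
      Complex.ofReal_div, Complex.ofReal_one, Complex.ofReal_natCast,
      mul_one_div_cancel (by exact_mod_cast hd.ne')]
    simp [g]
  have hterm (j : ℕ) : ‖g j‖ ≤ exp (-(n * (α * (1 - α)) * (1 - cos (2 * π * j / d)))) := by
    have hbase := Complex.norm_ofReal_mul_add_one_sub_le (z := ζ ^ j) (by simp [hnorm]) α
    rw [hζj, Complex.exp_ofReal_mul_I_re] at hbase
    simp only [g, norm_mul, norm_pow, norm_zpow, hnorm, one_zpow, one_pow, one_mul]
    calc ‖(α : ℂ) * ζ ^ j + (1 - α)‖ ^ n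
        ≤ exp (-(α * (1 - α) * (1 - cos (2 * π * j / d)))) ^ n := by gcongr; rwa [hζj]
      _ = _ := by rw [← exp_nat_mul]; ring_nf
  calc d * |S - 1 / d| = ‖∑ j ∈ Ico 1 d, g j‖ := by
        rw [← hfourier, norm_mul, Complex.norm_real, Complex.norm_natCast, norm_eq_abs]
    _ ≤ _ := (norm_sum_le _ _).trans (sum_le_sum fun j _ => hterm j)

/-- **Binomial probabilities along a residue class.**  There is an absolute constant
`C > 0` such that for every `α ∈ (0,1)`, integers `n, d ≥ 1` and `r ∈ ℤ`, the sum of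
the binomial probabilities `C(n,l)α^l(1−α)^{n−l}` over `0 ≤ l ≤ n` with
`l ≡ r (mod d)` differs from `1/d` by at most `C/(√(α(1−α))·√n)`. -/
theorem binomial_probabilities_residue_class :
    ∃ C : ℝ, 0 < C ∧
      ∀ (α : ℝ), 0 < α → α < 1 →
      ∀ (n d : ℕ), 1 ≤ n → 1 ≤ d →
      ∀ (r : ℤ),
        |(∑ l ∈ (Finset.range (n + 1)).filter
              (fun l : ℕ => Int.ModEq (d : ℤ) (l : ℤ) r),
            (n.choose l : ℝ) * α ^ l * (1 - α) ^ (n - l)) - 1 / (d : ℝ)|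
          ≤ C / (Real.sqrt (α * (1 - α)) * Real.sqrt n) := by
  refine ⟨1, one_pos, fun α h0 h1 n d hn hd r => ?_⟩
  have hvar : 0 < α * (1 - α) := mul_pos h0 (sub_pos.2 h1)
  have ht : 0 < n * (α * (1 - α)) := mul_pos (by exact_mod_cast hn) hvar
  have hbound := (natCast_mul_abs_sum_filter_binomial_sub_one_div_le α n hd r).trans
    (sum_Ico_exp_neg_mul_one_sub_cos_le ht d)
  rw [mul_le_mul_iff_right₀ (by exact_mod_cast hd)] at hbound
  calc _ ≤ √(π / (8 * (n * (α * (1 - α))))) := hbound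
    _ ≤ √(1 / (n * (α * (1 - α)))) := sqrt_le_sqrt <| by
      rw [div_le_div_iff₀ (by positivity) ht]
      nlinarith [pi_le_four]
    _ = 1 / (√(α * (1 - α)) * √n) := by
      rw [sqrt_div' _ ht.le, sqrt_one, sqrt_mul (Nat.cast_nonneg n), mul_comm]
end

section
/- There is an absolute constant C > 0 such that for every α ∈ (0,1), all integers s,t ≥ 0 and every integer M ≥ 1: |Σ_{0 ≤ l ≤ M, gcd(l+s, M+t) = 1} C(M,l)·α^l·(1−α)^{M−l} − Σ_{d | M+t} μ(d)/d| ≤ C·τ(M+t)/(√(α(1−α))·√M), where the divisor sum runs over all positive divisors d of M+t. -/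
open Finset Real
open scoped Nat ArithmeticFunction.Moebius

/-!
Möbius inversion writes the coprimality indicator as `∑_{d ∣ gcd(l+s, n)} μ(d)`, so the error is
`∑_{d ∣ n} μ(d) (P(d ∣ L + s) - 1/d)` for `L ~ Bin(M, α)`. Each term is at most the total
variation of the binomial weights: the residue classes mod `d` of `[0, (M+1)d)` are translates
of one another, so their masses differ by at most that variation, and they average to `1/d`.
The weights are unimodal, so the variation is at most twice the largest weight, and Stirling's
formula with the weighted AM-GM inequality bounds that by `2 / √(M α (1 - α))`.
-/

theorem pow_div_pow_le_exp_sub {a : ℝ} (ha : 0 ≤ a) {m : ℕ} (hm : 0 < m) :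
    a ^ m / (m : ℝ) ^ m ≤ exp (a - m) := by
  have hm' : (0 : ℝ) < m := by exact_mod_cast hm
  calc a ^ m / (m : ℝ) ^ m = (a / m) ^ m := (div_pow a _ m).symm
    _ ≤ exp (a / m - 1) ^ m :=
        pow_le_pow_left₀ (by positivity) (by linarith [add_one_le_exp (a / m - 1)]) m
    _ = exp (a - m) := by rw [← exp_nat_mul]; field_simp

theorem pow_mul_pow_le_of_add_eq {a b : ℝ} (ha : 0 ≤ a) (hb : 0 ≤ b) {m k : ℕ} (hm : 0 < m)
    (hk : 0 < k) (h : a + b = m + k) : a ^ m * b ^ k ≤ (m : ℝ) ^ m * (k : ℝ) ^ k := by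
  rw [← div_le_one (by positivity)]
  calc a ^ m * b ^ k / ((m : ℝ) ^ m * (k : ℝ) ^ k)
      = a ^ m / (m : ℝ) ^ m * (b ^ k / (k : ℝ) ^ k) := mul_div_mul_comm _ _ _ _
    _ ≤ exp (a - m) * exp (b - k) :=
        mul_le_mul (pow_div_pow_le_exp_sub ha hm) (pow_div_pow_le_exp_sub hb hk) (by positivity)
          (exp_nonneg _)
    _ = 1 := by rw [← exp_add, show a - m + (b - k) = 0 by linarith, exp_zero]

theorem le_div_sqrt_of_sq_mul_le {w x c : ℝ} (hw : 0 ≤ w) (hx : 0 < x) (hc : 0 ≤ c)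
    (h : w ^ 2 * x ≤ c ^ 2) : w ≤ c / √x := by
  rw [le_div_iff₀ (sqrt_pos.mpr hx)]
  calc w * √x = √(w ^ 2 * x) := by rw [sqrt_mul (sq_nonneg w), sqrt_sq hw]
    _ ≤ √(c ^ 2) := sqrt_le_sqrt h
    _ = c := sqrt_sq hc

namespace Stirling

theorem factorial_sq_mul_exp_one_pow {n : ℕ} (hn : n ≠ 0) :
    (n ! : ℝ) ^ 2 * exp 1 ^ (2 * n) = stirlingSeq n ^ 2 * 2 * (n : ℝ) ^ (2 * n + 1) := by
  have hn' : (0 : ℝ) < n := by positivity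
  rw [stirlingSeq, div_pow, mul_pow, sq_sqrt (by positivity), div_pow]
  field_simp
  ring

theorem stirlingSeq_le_exp_one_div_sqrt_two {n : ℕ} (hn : n ≠ 0) :
    stirlingSeq n ≤ exp 1 / √2 := by
  obtain ⟨n, rfl⟩ := Nat.exists_eq_succ_of_ne_zero hn
  simpa [stirlingSeq_one] using stirlingSeq'_antitone (Nat.zero_le n)

theorem pi_le_stirlingSeq_sq {n : ℕ} (hn : n ≠ 0) : π ≤ stirlingSeq n ^ 2 := by
  simpa [sq_sqrt pi_pos.le] using pow_le_pow_left₀ (sqrt_nonneg _) (sqrt_pi_le_stirlingSeq hn) 2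

theorem stirlingSeq_sq_le {n : ℕ} (hn : n ≠ 0) : stirlingSeq n ^ 2 ≤ exp 1 ^ 2 / 2 := by
  simpa [div_pow] using pow_le_pow_left₀ ((sqrt_nonneg _).trans (sqrt_pi_le_stirlingSeq hn))
    (stirlingSeq_le_exp_one_div_sqrt_two hn) 2

theorem choose_sq_mul_pow_mul_stirlingSeq {m k : ℕ} (hm : m ≠ 0) (hk : k ≠ 0) :
    ((m + k).choose m : ℝ) ^ 2 * m ^ (2 * m + 1) * k ^ (2 * k + 1)
        * (4 * (stirlingSeq m ^ 2 * stirlingSeq k ^ 2))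
      = 2 * stirlingSeq (m + k) ^ 2 * (m + k : ℝ) ^ (2 * (m + k) + 1) := by
  have hchoose : ((m + k).choose m : ℝ) * m ! * k ! = (m + k)! := by
    have h := Nat.choose_mul_factorial_mul_factorial (Nat.le_add_right m k)
    rw [Nat.add_sub_cancel_left] at h
    exact_mod_cast h
  have h : ((m + k).choose m : ℝ) ^ 2 * ((m ! : ℝ) ^ 2 * exp 1 ^ (2 * m))
      * ((k ! : ℝ) ^ 2 * exp 1 ^ (2 * k)) = ((m + k)! : ℝ) ^ 2 * exp 1 ^ (2 * (m + k)) := by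
    rw [← hchoose]; ring
  rw [factorial_sq_mul_exp_one_pow hm, factorial_sq_mul_exp_one_pow hk,
    factorial_sq_mul_exp_one_pow (by omega)] at h
  push_cast at h
  linear_combination h

end Stirling

theorem Nat.choose_sq_mul_pow_le (m k : ℕ) :
    (m + k).choose m ^ 2 * m ^ (2 * m + 1) * k ^ (2 * k + 1) ≤ (m + k) ^ (2 * (m + k) + 1) := by
  rcases Nat.eq_zero_or_pos m with rfl | hm
  · simp
  rcases Nat.eq_zero_or_pos k with rfl | hk
  · simp
  have hπ : π ^ 2 ≤ Stirling.stirlingSeq m ^ 2 * Stirling.stirlingSeq k ^ 2 := by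
    rw [sq]
    exact mul_le_mul (Stirling.pi_le_stirlingSeq_sq hm.ne') (Stirling.pi_le_stirlingSeq_sq hk.ne')
      pi_pos.le (by positivity)
  have he : exp 1 ^ 2 ≤ 4 * π ^ 2 := by nlinarith [exp_one_lt_d9, pi_gt_three, exp_pos 1]
  suffices h : ((m + k).choose m : ℝ) ^ 2 * m ^ (2 * m + 1) * k ^ (2 * k + 1) * (4 * π ^ 2)
      ≤ (m + k : ℝ) ^ (2 * (m + k) + 1) * (4 * π ^ 2) by
    exact_mod_cast le_of_mul_le_mul_right h (by positivity)
  calc _ ≤ ((m + k).choose m : ℝ) ^ 2 * m ^ (2 * m + 1) * k ^ (2 * k + 1)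
        * (4 * (Stirling.stirlingSeq m ^ 2 * Stirling.stirlingSeq k ^ 2)) := by gcongr
    _ = 2 * Stirling.stirlingSeq (m + k) ^ 2 * (m + k : ℝ) ^ (2 * (m + k) + 1) :=
        Stirling.choose_sq_mul_pow_mul_stirlingSeq hm.ne' hk.ne'
    _ ≤ 2 * (exp 1 ^ 2 / 2) * (m + k : ℝ) ^ (2 * (m + k) + 1) := by
        gcongr; exact Stirling.stirlingSeq_sq_le (by omega)
    _ ≤ _ := by rw [mul_div_cancel₀ _ two_ne_zero, mul_comm]; gcongr

theorem choose_mul_pow_mul_pow_sq_mul_le_four {N m k : ℕ} (hN : m + k = N) (hm : 0 < m)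
    (hk : 0 < k) {α β : ℝ} (hα : 0 ≤ α) (hβ : 0 ≤ β) (hαβ : α + β = 1)
    (hαm : N * α ≤ 2 * m) (hβk : N * β ≤ 2 * k) :
    (N.choose m * α ^ m * β ^ k) ^ 2 * (N * α * β) ≤ 4 := by
  have hamgm : ((N : ℝ) * α) ^ m * (N * β) ^ k ≤ (m : ℝ) ^ m * (k : ℝ) ^ k :=
    pow_mul_pow_le_of_add_eq (by positivity) (by positivity) hm hk
      (by rw [← hN]; push_cast; linear_combination ((m : ℝ) + k) * hαβ)
  have hchoose : (N.choose m : ℝ) ^ 2 * m ^ (2 * m + 1) * k ^ (2 * k + 1)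
      ≤ (N : ℝ) ^ (2 * N + 1) := by
    exact_mod_cast hN ▸ Nat.choose_sq_mul_pow_le m k
  refine le_of_mul_le_mul_right ?_ (by positivity : (0 : ℝ) < m ^ (2 * m + 1) * k ^ (2 * k + 1))
  calc (N.choose m * α ^ m * β ^ k : ℝ) ^ 2 * (N * α * β) * (m ^ (2 * m + 1) * k ^ (2 * k + 1))
      = (N.choose m : ℝ) ^ 2 * m ^ (2 * m + 1) * k ^ (2 * k + 1)
          * ((α ^ m * β ^ k) ^ 2 * (N * α * β)) := by ring
    _ ≤ (N : ℝ) ^ (2 * N + 1) * ((α ^ m * β ^ k) ^ 2 * (N * α * β)) := by gcongr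
    _ = ((N * α) ^ m * (N * β) ^ k) ^ 2 * ((N * α) * (N * β)) := by rw [← hN]; ring
    _ ≤ ((m : ℝ) ^ m * (k : ℝ) ^ k) ^ 2 * ((2 * m) * (2 * k)) := by gcongr
    _ = 4 * (m ^ (2 * m + 1) * k ^ (2 * k + 1)) := by ring

theorem Finset.sum_range_mul_eq_sum_sum {β : Type*} [AddCommMonoid β] (g : ℕ → β) (K d : ℕ) :
    ∑ j ∈ range (K * d), g j = ∑ k ∈ range K, ∑ i ∈ range d, g (k * d + i) := by
  induction K with
  | zero => simp
  | succ K ih => rw [Nat.succ_mul, sum_range_add, ih, sum_range_succ]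

theorem Finset.sum_filter_mod_eq {β : Type*} [AddCommMonoid β] (f : ℕ → β) (K : ℕ) {d r : ℕ}
    (hr : r < d) : ∑ l ∈ range (K * d) with l % d = r, f l = ∑ k ∈ range K, f (k * d + r) := by
  rw [sum_filter, sum_range_mul_eq_sum_sum]
  refine sum_congr rfl fun k _ => ?_
  have hmod : ∀ i ∈ range d, (k * d + i) % d = i := fun i hi => by
    rw [Nat.mul_add_mod_self_right, Nat.mod_eq_of_lt (mem_range.mp hi)]
  rw [sum_congr rfl fun i hi => by rw [hmod i hi], sum_ite_eq' (range d) r,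
    if_pos (mem_range.mpr hr)]

theorem Nat.exists_lt_forall_dvd_add_iff_mod_eq {d : ℕ} (hd : 0 < d) (s : ℕ) :
    ∃ ρ < d, ∀ l, d ∣ l + s ↔ l % d = ρ := by
  have : NeZero d := ⟨hd.ne'⟩
  refine ⟨(-(s : ZMod d)).val, ZMod.val_lt _, fun l => ?_⟩
  rw [← ZMod.natCast_eq_zero_iff, ← ZMod.val_natCast, (ZMod.val_injective d).eq_iff,
    Nat.cast_add, add_eq_zero_iff_eq_neg]

theorem abs_sub_le_sum_Ico_abs_sub (f : ℕ → ℝ) {a b : ℕ} (hab : a ≤ b) :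
    |f b - f a| ≤ ∑ j ∈ Ico a b, |f (j + 1) - f j| := by
  rw [← sum_Ico_sub f hab]
  exact abs_sum_le_sum_abs _ _

theorem sum_range_abs_sub_le_two_mul {f : ℕ → ℝ} (hf : ∀ j, 0 ≤ f j) {m N : ℕ} (hmN : m ≤ N)
    (hup : ∀ j < m, f j ≤ f (j + 1)) (hdown : ∀ j, m ≤ j → f (j + 1) ≤ f j) :
    ∑ j ∈ range N, |f (j + 1) - f j| ≤ 2 * f m := by
  have hrise : ∑ j ∈ range m, |f (j + 1) - f j| = f m - f 0 := by
    rw [← sum_range_sub f m]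
    exact sum_congr rfl fun j hj => abs_of_nonneg (sub_nonneg.mpr (hup j (mem_range.mp hj)))
  have hfall : ∑ j ∈ Ico m N, |f (j + 1) - f j| = f m - f N := by
    rw [← neg_sub, ← sum_Ico_sub f hmN, ← sum_neg_distrib]
    exact sum_congr rfl fun j hj => abs_of_nonpos (sub_nonpos.mpr (hdown j (mem_Ico.mp hj).1))
  rw [← sum_range_add_sum_Ico _ hmN, hrise, hfall]
  linarith [hf 0, hf N]

theorem abs_sum_mul_add_sub_sum_mul_add_le (f : ℕ → ℝ) (K : ℕ) {d a b : ℕ} (ha : a < d)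
    (hb : b < d) :
    |∑ k ∈ range K, f (k * d + a) - ∑ k ∈ range K, f (k * d + b)|
      ≤ ∑ j ∈ range (K * d), |f (j + 1) - f j| := by
  wlog hab : a ≤ b generalizing a b
  · rw [abs_sub_comm]; exact this hb ha (by omega)
  rw [← sum_sub_distrib, sum_range_mul_eq_sum_sum]
  refine (abs_sum_le_sum_abs _ _).trans (sum_le_sum fun k _ => ?_)
  have hsub : Ico a b ⊆ range d := range_eq_Ico d ▸ Ico_subset_Ico (Nat.zero_le a) hb.le
  calc |f (k * d + a) - f (k * d + b)|
      ≤ ∑ i ∈ Ico a b, |f (k * d + i + 1) - f (k * d + i)| := by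
        rw [abs_sub_comm]; exact abs_sub_le_sum_Ico_abs_sub (fun i => f (k * d + i)) hab
    _ ≤ ∑ i ∈ range d, |f (k * d + i + 1) - f (k * d + i)| :=
        sum_le_sum_of_subset_of_nonneg hsub fun _ _ _ => abs_nonneg _

theorem abs_sum_filter_mod_eq_sub_le (f : ℕ → ℝ) (K : ℕ) {d ρ : ℕ} (hρ : ρ < d) :
    |∑ l ∈ range (K * d) with l % d = ρ, f l - (∑ l ∈ range (K * d), f l) / d|
      ≤ ∑ j ∈ range (K * d), |f (j + 1) - f j| := by
  set F : ℕ → ℝ := fun r => ∑ k ∈ range K, f (k * d + r)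
  have hd : (0 : ℝ) < d := by exact_mod_cast (Nat.zero_le ρ).trans_lt hρ
  have htotal : ∑ l ∈ range (K * d), f l = ∑ r ∈ range d, F r := by
    rw [sum_range_mul_eq_sum_sum, sum_comm]
  have havg : F ρ - (∑ r ∈ range d, F r) / d = (∑ r ∈ range d, (F ρ - F r)) / d := by
    rw [sum_sub_distrib, sum_const, card_range, nsmul_eq_mul]
    field_simp
  rw [sum_filter_mod_eq f K hρ, htotal, havg, abs_div, abs_of_pos hd, div_le_iff₀ hd]
  calc |∑ r ∈ range d, (F ρ - F r)| ≤ ∑ r ∈ range d, |F ρ - F r| := abs_sum_le_sum_abs _ _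
    _ ≤ ∑ _r ∈ range d, ∑ j ∈ range (K * d), |f (j + 1) - f j| :=
        sum_le_sum fun r hr => abs_sum_mul_add_sub_sum_mul_add_le f K hρ (mem_range.mp hr)
    _ = _ := by rw [sum_const, card_range, nsmul_eq_mul, mul_comm]

theorem sum_divisors_filter_dvd_moebius {R : Type*} [Ring R] {n : ℕ} (hn : n ≠ 0) (a : ℕ) :
    ∑ d ∈ n.divisors with d ∣ a, (μ d : R) = if Nat.gcd a n = 1 then 1 else 0 := by
  have hdiv : {d ∈ n.divisors | d ∣ a} = (Nat.gcd a n).divisors := by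
    rw [← Nat.divisors_filter_dvd_of_dvd hn (Nat.gcd_dvd_right a n)]
    refine filter_congr fun d hd => ?_
    rw [Nat.dvd_gcd_iff, and_iff_left (Nat.dvd_of_mem_divisors hd)]
  have h := congrArg (· (Nat.gcd a n)) (ArithmeticFunction.coe_moebius_mul_coe_zeta (R := R))
  simpa only [ArithmeticFunction.coe_mul_zeta_apply, ArithmeticFunction.one_apply,
    ArithmeticFunction.intCoe_apply, hdiv] using h

theorem sum_filter_coprime_eq_sum_moebius {R ι : Type*} [CommRing R] (S : Finset ι) (w : ι → R)
    (a : ι → ℕ) {n : ℕ} (hn : n ≠ 0) :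
    ∑ i ∈ S with Nat.gcd (a i) n = 1, w i =
      ∑ d ∈ n.divisors, (μ d : R) * ∑ i ∈ S with d ∣ a i, w i := by
  calc ∑ i ∈ S with Nat.gcd (a i) n = 1, w i
      = ∑ i ∈ S, (∑ d ∈ n.divisors with d ∣ a i, (μ d : R)) * w i := by
        rw [sum_filter]
        refine sum_congr rfl fun i _ => ?_
        rw [sum_divisors_filter_dvd_moebius hn, ite_mul, one_mul, zero_mul]
    _ = _ := by
        simp_rw [sum_filter, sum_mul, ite_mul, zero_mul, mul_sum, mul_ite, mul_zero]
        exact sum_comm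

noncomputable def binomialWeight (M : ℕ) (α : ℝ) (l : ℕ) : ℝ :=
  (M.choose l : ℝ) * α ^ l * (1 - α) ^ (M - l)

namespace binomialWeight

variable {M : ℕ} {α : ℝ}

theorem nonneg (h0 : 0 ≤ α) (h1 : α ≤ 1) (l : ℕ) : 0 ≤ binomialWeight M α l := by
  have : 0 ≤ 1 - α := sub_nonneg.mpr h1
  unfold binomialWeight; positivity

theorem eq_zero_of_lt {l : ℕ} (h : M < l) : binomialWeight M α l = 0 := by
  simp [binomialWeight, Nat.choose_eq_zero_of_lt h]

theorem sum_range : ∑ l ∈ range (M + 1), binomialWeight M α l = 1 := by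
  have h := add_pow α (1 - α) M
  rw [add_sub_cancel, one_pow] at h
  rw [h]
  exact sum_congr rfl fun l _ => by unfold binomialWeight; ring

theorem le_one (h0 : 0 ≤ α) (h1 : α ≤ 1) (l : ℕ) : binomialWeight M α l ≤ 1 := by
  rcases lt_or_ge M l with hl | hl
  · rw [eq_zero_of_lt hl]; exact zero_le_one
  · rw [← sum_range (M := M) (α := α)]
    exact single_le_sum (fun j _ => nonneg h0 h1 j) (mem_range.mpr (by omega))

theorem succ_mul_eq {l : ℕ} (h : l < M) :
    binomialWeight M α (l + 1) * ((l + 1) * (1 - α)) = binomialWeight M α l * ((M - l) * α) := by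
  have hc : (M.choose (l + 1) : ℝ) * (l + 1) = M.choose l * (M - l) := by
    rw [← Nat.cast_sub h.le]
    exact_mod_cast Nat.choose_succ_right_eq M l
  obtain ⟨j, rfl⟩ := Nat.exists_eq_add_of_lt h
  rw [binomialWeight, binomialWeight, show l + j + 1 - (l + 1) = j by omega,
    show l + j + 1 - l = j + 1 by omega]
  linear_combination (α ^ (l + 1) * (1 - α) ^ (j + 1)) * hc

theorem le_succ (h0 : 0 < α) (h1 : α < 1) {l : ℕ} (hl : l + 1 ≤ (M + 1) * α) :
    binomialWeight M α l ≤ binomialWeight M α (l + 1) := by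
  have hlM : l < M := by
    have : (l : ℝ) < M := by nlinarith
    exact_mod_cast this
  have hpos : 0 < ((l : ℝ) + 1) * (1 - α) := by have := Nat.cast_nonneg (α := ℝ) l; nlinarith
  have hratio : ((l : ℝ) + 1) * (1 - α) ≤ (M - l) * α := by nlinarith
  exact le_of_mul_le_mul_right ((mul_le_mul_of_nonneg_left hratio (nonneg h0.le h1.le l)).trans
    (succ_mul_eq hlM).symm.le) hpos

theorem succ_le (h0 : 0 < α) (h1 : α < 1) {l : ℕ} (hl : (M + 1) * α ≤ l + 1) :
    binomialWeight M α (l + 1) ≤ binomialWeight M α l := by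
  rcases lt_or_ge l M with hlM | hlM
  · have hpos : 0 < ((l : ℝ) + 1) * (1 - α) := by have := Nat.cast_nonneg (α := ℝ) l; nlinarith
    have hratio : (M - l) * α ≤ ((l : ℝ) + 1) * (1 - α) := by nlinarith
    exact le_of_mul_le_mul_right ((succ_mul_eq hlM).le.trans
      (mul_le_mul_of_nonneg_left hratio (nonneg h0.le h1.le l))) hpos
  · rw [eq_zero_of_lt (by omega)]
    exact nonneg h0.le h1.le l

theorem exists_mode (h0 : 0 < α) (h1 : α < 1) :
    ∃ m ≤ M, |(m : ℝ) - M * α| < 1 ∧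
      (∀ j < m, binomialWeight M α j ≤ binomialWeight M α (j + 1)) ∧
      ∀ j, m ≤ j → binomialWeight M α (j + 1) ≤ binomialWeight M α j := by
  set x := ((M : ℝ) + 1) * α
  have hfloor : (⌊x⌋₊ : ℝ) ≤ x := Nat.floor_le (by positivity)
  have hlt_floor : x < ⌊x⌋₊ + 1 := Nat.lt_floor_add_one x
  refine ⟨min M ⌊x⌋₊, min_le_left _ _, ?_, fun j hj => le_succ h0 h1 ?_, fun j hj => ?_⟩
  · rw [abs_lt]
    rcases min_cases M ⌊x⌋₊ with ⟨hm, hle⟩ | ⟨hm, hlt⟩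
    · have : (M : ℝ) ≤ ⌊x⌋₊ := by exact_mod_cast hle
      rw [hm]; constructor <;> nlinarith
    · have : (⌊x⌋₊ : ℝ) < M := by exact_mod_cast hlt
      rw [hm]; constructor <;> nlinarith
  · have : ((j + 1 : ℕ) : ℝ) ≤ ⌊x⌋₊ := by exact_mod_cast (show j + 1 ≤ ⌊x⌋₊ by omega)
    push_cast at this
    linarith
  · rcases lt_or_ge j M with hjM | hjM
    · have : (⌊x⌋₊ : ℝ) ≤ j := by exact_mod_cast (show ⌊x⌋₊ ≤ j by omega)
      exact succ_le h0 h1 (by linarith)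
    · rw [eq_zero_of_lt (by omega)]
      exact nonneg h0.le h1.le j

theorem sq_mul_le_four (h0 : 0 < α) (h1 : α < 1) {m : ℕ} (hmM : m ≤ M)
    (hm : |(m : ℝ) - M * α| < 1) : binomialWeight M α m ^ 2 * (M * α * (1 - α)) ≤ 4 := by
  rw [abs_lt] at hm
  have hw0 := nonneg h0.le h1.le (M := M) m
  have hw1 := le_one h0.le h1.le (M := M) m
  have hM : (0 : ℝ) ≤ M := Nat.cast_nonneg M
  have of_le_one : M * α * (1 - α) ≤ 1 → binomialWeight M α m ^ 2 * (M * α * (1 - α)) ≤ 4 :=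
    fun h => by nlinarith [mul_nonneg (mul_nonneg hM h0.le) (sub_nonneg.mpr h1.le)]
  obtain ⟨k, hk⟩ := Nat.exists_eq_add_of_le hmM
  rcases Nat.eq_zero_or_pos m with rfl | hm0
  · push_cast at hm
    exact of_le_one (by nlinarith [mul_nonneg (mul_nonneg hM h0.le) h0.le])
  rcases Nat.eq_zero_or_pos k with rfl | hk0
  · have hmeq : (m : ℝ) = M := by rw [hk, add_zero]
    exact of_le_one (by nlinarith [mul_nonneg hM (sq_nonneg (1 - α))])
  have hkR : (k : ℝ) = M - m := by rw [hk]; push_cast; ring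
  have hm1 : (1 : ℝ) ≤ m := by exact_mod_cast hm0
  have hk1 : (1 : ℝ) ≤ k := by exact_mod_cast hk0
  rw [binomialWeight, hk, Nat.add_sub_cancel_left, ← hk]
  exact choose_mul_pow_mul_pow_sq_mul_le_four hk.symm hm0 hk0 h0.le (sub_nonneg.mpr h1.le)
    (add_sub_cancel α 1) (by linarith) (by rw [hkR]; linarith)

theorem abs_sum_filter_dvd_sub_inv_le (h0 : 0 < α) (h1 : α < 1) (hM : 0 < M) (s : ℕ) {d : ℕ}
    (hd : 0 < d) :
    |∑ l ∈ range (M + 1) with d ∣ l + s, binomialWeight M α l - 1 / d|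
      ≤ 4 / √(M * α * (1 - α)) := by
  obtain ⟨ρ, hρ, hdvd⟩ := Nat.exists_lt_forall_dvd_add_iff_mod_eq hd s
  obtain ⟨m, hmM, hm, hup, hdown⟩ := exists_mode (M := M) h0 h1
  have hsubset : range (M + 1) ⊆ range ((M + 1) * d) :=
    range_subset_range.mpr (Nat.le_mul_of_pos_right _ hd)
  have hvanish : ∀ l ∈ range ((M + 1) * d), l ∉ range (M + 1) → binomialWeight M α l = 0 :=
    fun l _ hl => eq_zero_of_lt (by simpa using hl)
  have hfilter : ∑ l ∈ range (M + 1) with d ∣ l + s, binomialWeight M α l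
      = ∑ l ∈ range ((M + 1) * d) with l % d = ρ, binomialWeight M α l := by
    rw [sum_filter, sum_filter,
      sum_subset hsubset fun l hl hnl => by rw [hvanish l hl hnl, ite_self]]
    simp_rw [hdvd]
  have htotal : ∑ l ∈ range ((M + 1) * d), binomialWeight M α l = 1 := by
    rw [← sum_subset hsubset hvanish, sum_range]
  have hmode : binomialWeight M α m ≤ 2 / √(M * α * (1 - α)) :=
    le_div_sqrt_of_sq_mul_le (nonneg h0.le h1.le m)
      (mul_pos (mul_pos (Nat.cast_pos.mpr hM) h0) (sub_pos.mpr h1)) zero_le_two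
      (by norm_num; exact sq_mul_le_four h0 h1 hmM hm)
  calc |∑ l ∈ range (M + 1) with d ∣ l + s, binomialWeight M α l - 1 / d|
      = |∑ l ∈ range ((M + 1) * d) with l % d = ρ, binomialWeight M α l
          - (∑ l ∈ range ((M + 1) * d), binomialWeight M α l) / d| := by rw [hfilter, htotal]
    _ ≤ ∑ j ∈ range ((M + 1) * d), |binomialWeight M α (j + 1) - binomialWeight M α j| :=
        abs_sum_filter_mod_eq_sub_le _ _ hρ
    _ ≤ 2 * binomialWeight M α m :=
        sum_range_abs_sub_le_two_mul (nonneg h0.le h1.le)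
          (hmM.trans (Nat.le_succ M) |>.trans (Nat.le_mul_of_pos_right _ hd)) hup hdown
    _ ≤ 2 * (2 / √(M * α * (1 - α))) := by gcongr
    _ = 4 / √(M * α * (1 - α)) := by ring

end binomialWeight

/-- **Binomial probabilities on coprimality sets.**  There is an absolute constant
`C > 0` such that for every `α ∈ (0,1)`, all integers `s, t ≥ 0` and every `M ≥ 1`,
the sum of `C(M,l)α^l(1−α)^{M−l}` over `0 ≤ l ≤ M` with `gcd(l+s, M+t) = 1` differs
from `∑_{d ∣ M+t} μ(d)/d` by at most `C·τ(M+t)/(√(α(1−α))·√M)`. -/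
theorem binomial_probabilities_coprime_sum :
    ∃ C : ℝ, 0 < C ∧
      ∀ (α : ℝ), 0 < α → α < 1 →
      ∀ (s t M : ℕ), 1 ≤ M →
        |(∑ l ∈ (Finset.range (M + 1)).filter
              (fun l => Nat.gcd (l + s) (M + t) = 1),
            (M.choose l : ℝ) * α ^ l * (1 - α) ^ (M - l)) -
          ∑ d ∈ (M + t).divisors, (ArithmeticFunction.moebius d : ℝ) / (d : ℝ)|
          ≤ C * ((M + t).divisors.card : ℝ) / (Real.sqrt (α * (1 - α)) * Real.sqrt M) := by
  refine ⟨4, by norm_num, fun α h0 h1 s t M hM => ?_⟩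
  change |∑ l ∈ range (M + 1) with Nat.gcd (l + s) (M + t) = 1, binomialWeight M α l - _| ≤ _
  rw [sum_filter_coprime_eq_sum_moebius _ _ (· + s) (by omega), ← sum_sub_distrib]
  calc _ ≤ ∑ d ∈ (M + t).divisors,
        |(μ d : ℝ) * ∑ l ∈ range (M + 1) with d ∣ l + s, binomialWeight M α l - μ d / d| :=
        abs_sum_le_sum_abs _ _
    _ ≤ ∑ _d ∈ (M + t).divisors, 4 / √(M * α * (1 - α)) := by
        refine sum_le_sum fun d hd => ?_
        rw [div_eq_mul_one_div, ← mul_sub, abs_mul]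
        have hμ : |(μ d : ℝ)| ≤ 1 := by exact_mod_cast ArithmeticFunction.abs_moebius_le_one
        exact (mul_le_of_le_one_left (abs_nonneg _) hμ).trans
          (binomialWeight.abs_sum_filter_dvd_sub_inv_le h0 h1 hM s (Nat.pos_of_mem_divisors hd))
    _ = _ := by
        rw [sum_const, nsmul_eq_mul, show (M : ℝ) * α * (1 - α) = α * (1 - α) * M by ring,
          sqrt_mul (mul_pos h0 (sub_pos.mpr h1)).le]
        ring
end

section
/- There is an absolute constant C > 0 such that for every α ∈ (0,1), every integer k ≥ 1, all integers s,t ≥ 0 and every integer M ≥ 1: |Σ_{0 ≤ l ≤ M, gcd(l+s, M+t) = k} C(M,l)·α^l·(1−α)^{M−l} − g_k(M+t)·(1/k)·Σ_{d ≥ 1, kd | M+t} μ(d)/d| ≤ C·g_k(M+t)·τ((M+t)/k)/(√(α(1−α))·√M), where g_k(n) = 1 if k divides n and g_k(n) = 0 otherwise. -/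
/-!
Write `M + t = k n`. Möbius inversion turns the indicator of `gcd (l + s) (k n) = k` into
`∑_{d ∣ n} μ(d) [k d ∣ l + s]`, so the error is a combination, with coefficients `μ(d)`, of the
deviations of `P(m ∣ X + s)` from `1 / m`, where `m = k d` and `X` is binomial. Cutting `ℕ` into
blocks of length `m`, the masses of the `m` residue classes differ pairwise by at most the total
variation `∑ |f (l + 1) - f l|` and average to `1 / m`. The binomial distribution is unimodal, so
its total variation is at most twice its mode value `C(M, a) α^a (1 - α)^b`, which Stirling's
formula and `α^a (1 - α)^b ≤ (a / M)^a (b / M)^b` bound by `1 / √(M α (1 - α))`.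
-/

open Finset Real ArithmeticFunction
open scoped Nat ArithmeticFunction.Moebius

lemma sum_range_mul_eq_sum_sum_add (g : ℕ → ℝ) (m Q : ℕ) :
    ∑ l ∈ range (Q * m), g l = ∑ j ∈ range m, ∑ q ∈ range Q, g (q * m + j) := by
  induction Q with
  | zero => simp
  | succ Q ih =>
    rw [Nat.succ_mul, sum_range_add, ih, ← sum_add_distrib]
    exact sum_congr rfl fun j _ => (sum_range_succ _ Q).symm

lemma sum_abs_sub_le_two_mul_of_unimodal {f : ℕ → ℝ} (hf : ∀ l, 0 ≤ f l) {m : ℕ}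
    (hup : ∀ l < m, f l ≤ f (l + 1)) (hdown : ∀ l, m ≤ l → f (l + 1) ≤ f l) (L : ℕ) :
    ∑ l ∈ range L, |f (l + 1) - f l| ≤ 2 * f m := by
  have hrise : ∑ l ∈ range m, |f (l + 1) - f l| = f m - f 0 := by
    rw [← sum_range_sub]
    exact sum_congr rfl fun l hl => abs_of_nonneg (sub_nonneg.2 (hup l (mem_range.1 hl)))
  have hfall : ∑ l ∈ range L, |f (m + l + 1) - f (m + l)| = f m - f (m + L) := by
    have := sum_range_sub' (fun l => f (m + l)) L
    rw [add_zero] at this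
    rw [← this]
    exact sum_congr rfl fun l _ => by
      rw [abs_of_nonpos (sub_nonpos.2 (hdown _ (Nat.le_add_right m l))), neg_sub, add_assoc]
  calc ∑ l ∈ range L, |f (l + 1) - f l|
      ≤ ∑ l ∈ range (m + L), |f (l + 1) - f l| :=
        sum_le_sum_of_subset_of_nonneg (range_subset_range.2 (Nat.le_add_left L m))
          fun _ _ _ => abs_nonneg _
    _ = (f m - f 0) + (f m - f (m + L)) := by rw [sum_range_add, hrise, ← hfall]
    _ ≤ 2 * f m := by linarith [hf 0, hf (m + L)]

lemma abs_sub_average_le {p : ℕ → ℝ} {m : ℕ} (hm : m ≠ 0) {V : ℝ}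
    (hp : ∀ i < m, ∀ j < m, |p i - p j| ≤ V) {r : ℕ} (hr : r < m) :
    |p r - (∑ j ∈ range m, p j) / m| ≤ V := by
  have hm' : (0 : ℝ) < m := by positivity
  have : p r - (∑ j ∈ range m, p j) / m = (∑ j ∈ range m, (p r - p j)) / m := by
    rw [sum_sub_distrib, sum_const, card_range, nsmul_eq_mul]; field_simp
  rw [this, abs_div, abs_of_pos hm', div_le_iff₀ hm']
  calc |∑ j ∈ range m, (p r - p j)| ≤ ∑ j ∈ range m, |p r - p j| := abs_sum_le_sum_abs _ _
    _ ≤ ∑ _j ∈ range m, V := sum_le_sum fun j hj => hp r hr j (mem_range.1 hj)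
    _ = V * m := by rw [sum_const, card_range, nsmul_eq_mul, mul_comm]

lemma abs_sum_residue_sub_average_le (f : ℕ → ℝ) {m : ℕ} (hm : m ≠ 0) (Q : ℕ) {r : ℕ}
    (hr : r < m) :
    |∑ q ∈ range Q, f (q * m + r) - (∑ l ∈ range (Q * m), f l) / m|
      ≤ ∑ l ∈ range (Q * m), |f (l + 1) - f l| := by
  set p : ℕ → ℝ := fun j => ∑ q ∈ range Q, f (q * m + j)
  rw [sum_range_mul_eq_sum_sum_add f, sum_range_mul_eq_sum_sum_add fun l => |f (l + 1) - f l|]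
  refine abs_sub_average_le (p := p) hm (fun i hi j hj => ?_) hr
  wlog hji : j ≤ i generalizing i j
  · rw [abs_sub_comm]; exact this j hj i hi (le_of_not_ge hji)
  calc |p i - p j| = dist (p j) (p i) := by rw [Real.dist_eq, abs_sub_comm]
    _ ≤ ∑ t ∈ Ico j i, dist (p t) (p (t + 1)) := dist_le_Ico_sum_dist p hji
    _ ≤ ∑ t ∈ range m, dist (p t) (p (t + 1)) :=
        sum_le_sum_of_subset_of_nonneg (fun t ht => mem_range.2 ((mem_Ico.1 ht).2.trans hi))
          fun _ _ _ => dist_nonneg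
    _ ≤ ∑ t ∈ range m, ∑ q ∈ range Q, |f (q * m + t + 1) - f (q * m + t)| :=
        sum_le_sum fun t _ => by
          rw [Real.dist_eq, abs_sub_comm, ← sum_sub_distrib]; exact abs_sum_le_sum_abs _ _

lemma dvd_add_iff_eq_val_neg {m : ℕ} [NeZero m] {j : ℕ} (hj : j < m) (s : ℕ) :
    m ∣ j + s ↔ j = (-(s : ZMod m)).val := by
  rw [← ZMod.natCast_eq_zero_iff, Nat.cast_add, add_eq_zero_iff_eq_neg]
  constructor
  · intro h; rw [← h, ZMod.val_natCast_of_lt hj]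
  · intro h; rw [h, ZMod.natCast_zmod_val]

lemma abs_sum_dvd_add_sub_average_le (f : ℕ → ℝ) {m : ℕ} (hm : m ≠ 0) (s Q : ℕ) :
    |∑ l ∈ range (Q * m), (if m ∣ l + s then f l else 0) - (∑ l ∈ range (Q * m), f l) / m|
      ≤ ∑ l ∈ range (Q * m), |f (l + 1) - f l| := by
  have : NeZero m := ⟨hm⟩
  have hr : (-(s : ZMod m)).val < m := ZMod.val_lt _
  have hdvd : ∀ q j, m ∣ q * m + j + s ↔ m ∣ j + s := fun q j => by
    rw [add_assoc]; exact Nat.dvd_add_right (dvd_mul_left m q)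
  have hresidue : ∑ l ∈ range (Q * m), (if m ∣ l + s then f l else 0)
      = ∑ q ∈ range Q, f (q * m + (-(s : ZMod m)).val) := by
    rw [sum_range_mul_eq_sum_sum_add, sum_eq_single_of_mem _ (mem_range.2 hr)]
    · exact sum_congr rfl fun q _ => if_pos ((hdvd q _).2 ((dvd_add_iff_eq_val_neg hr s).2 rfl))
    · intro j hj hjr
      refine sum_eq_zero fun q _ => if_neg ?_
      rwa [hdvd, dvd_add_iff_eq_val_neg (mem_range.1 hj)]
  rw [hresidue]
  exact abs_sum_residue_sub_average_le f hm Q hr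

lemma factorial_le_exp_one_mul_sqrt_mul_pow {n : ℕ} (hn : n ≠ 0) :
    (n ! : ℝ) ≤ exp 1 * √n * (n / exp 1) ^ n := by
  have hseq : Stirling.stirlingSeq n ≤ exp 1 / √2 := by
    obtain ⟨k, rfl⟩ := Nat.exists_eq_succ_of_ne_zero hn
    rw [← Stirling.stirlingSeq_one]
    exact Stirling.stirlingSeq'_antitone (Nat.zero_le k)
  have hfac : (n ! : ℝ) = Stirling.stirlingSeq n * (√(2 * n) * (n / exp 1) ^ n) := by
    rw [Stirling.stirlingSeq, div_mul_cancel₀]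
    positivity
  calc (n ! : ℝ) ≤ exp 1 / √2 * (√(2 * n) * (n / exp 1) ^ n) := by rw [hfac]; gcongr
    _ = exp 1 * √n * (n / exp 1) ^ n := by rw [sqrt_mul zero_le_two]; field_simp

lemma pow_le_pow_mul_exp_sub {t : ℝ} (ht : 0 ≤ t) (a : ℕ) :
    t ^ a ≤ (a : ℝ) ^ a * exp (t - a) := by
  rcases Nat.eq_zero_or_pos a with rfl | ha
  · simpa using one_le_exp ht
  have ha' : (0 : ℝ) < a := by positivity
  calc t ^ a = (a * (t / a)) ^ a := by rw [mul_div_cancel₀ t ha'.ne']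
    _ ≤ (a * exp (t / a - 1)) ^ a := by gcongr; linarith [add_one_le_exp (t / a - 1)]
    _ = (a : ℝ) ^ a * exp (t - a) := by
        rw [mul_pow, ← exp_nat_mul, mul_sub, mul_div_cancel₀ t ha'.ne', mul_one]

lemma add_pow_mul_pow_mul_pow_le {x y : ℝ} (hx : 0 ≤ x) (hy : 0 ≤ y) (hxy : x + y = 1)
    (a b : ℕ) : ((a : ℝ) + b) ^ (a + b) * (x ^ a * y ^ b) ≤ (a : ℝ) ^ a * (b : ℝ) ^ b := by
  calc ((a : ℝ) + b) ^ (a + b) * (x ^ a * y ^ b) = ((a + b) * x) ^ a * ((a + b) * y) ^ b := by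
        rw [mul_pow, mul_pow, pow_add]; ring
    _ ≤ (a ^ a * exp ((a + b) * x - a)) * (b ^ b * exp ((a + b) * y - b)) := by
        gcongr <;> exact pow_le_pow_mul_exp_sub (by positivity) _
    _ = (a : ℝ) ^ a * (b : ℝ) ^ b := by
        rw [mul_mul_mul_comm, ← exp_add,
          show (a + b) * x - a + ((a + b) * y - b) = (0 : ℝ) by linear_combination (↑a + ↑b) * hxy,
          exp_zero, mul_one]

lemma choose_mul_pow_mul_pow_le {a b : ℕ} (ha : a ≠ 0) (hb : b ≠ 0) {x y : ℝ} (hx : 0 ≤ x)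
    (hy : 0 ≤ y) (hxy : x + y = 1) :
    ((a + b).choose a : ℝ) * x ^ a * y ^ b ≤ exp 1 / (2 * π) * (√(a + b) / √(a * b)) := by
  have hchoose : ((a + b).choose a : ℝ) = (a + b)! / (a ! * b !) := by
    rw [Nat.cast_choose ℝ (Nat.le_add_right a b), Nat.add_sub_cancel_left]
  have hsqrt : √(2 * π * a) * √(2 * π * b) = 2 * π * √(a * b) := by
    rw [← sqrt_mul (by positivity), show 2 * π * a * (2 * π * b) = (2 * π) ^ 2 * (a * b) by ring,
      sqrt_mul (by positivity), sqrt_sq (by positivity)]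
  rw [hchoose, div_mul_eq_mul_div, div_mul_eq_mul_div, div_le_iff₀ (by positivity)]
  calc ((a + b)! : ℝ) * x ^ a * y ^ b
      ≤ (exp 1 * √((a + b : ℕ) : ℝ) * ((a + b : ℕ) / exp 1) ^ (a + b)) * x ^ a * y ^ b := by
        gcongr; exact factorial_le_exp_one_mul_sqrt_mul_pow (by omega)
    _ = exp 1 * √(a + b) * (((a : ℝ) + b) ^ (a + b) * (x ^ a * y ^ b)) / exp 1 ^ (a + b) := by
        push_cast; rw [div_pow]; ring
    _ ≤ exp 1 * √(a + b) * ((a : ℝ) ^ a * (b : ℝ) ^ b) / exp 1 ^ (a + b) := by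
        gcongr exp 1 * √(a + b) * ?_ / _
        exact add_pow_mul_pow_mul_pow_le hx hy hxy a b
    _ = exp 1 / (2 * π) * (√(a + b) / √(a * b))
          * ((√(2 * π * a) * (a / exp 1) ^ a) * (√(2 * π * b) * (b / exp 1) ^ b)) := by
        rw [mul_mul_mul_comm (√(2 * π * a)), hsqrt, div_pow, div_pow, pow_add]
        field_simp
    _ ≤ exp 1 / (2 * π) * (√(a + b) / √(a * b)) * (a ! * b !) := by
        gcongr <;> exact Stirling.le_factorial_stirling _

def binomialProb (M : ℕ) (α : ℝ) (l : ℕ) : ℝ :=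
  M.choose l * α ^ l * (1 - α) ^ (M - l)

section binomialProb

variable {M : ℕ} {α : ℝ}

lemma binomialProb_nonneg (h0 : 0 ≤ α) (h1 : α ≤ 1) (l : ℕ) : 0 ≤ binomialProb M α l := by
  have : 0 ≤ 1 - α := sub_nonneg.2 h1
  unfold binomialProb; positivity

lemma binomialProb_of_lt {l : ℕ} (h : M < l) : binomialProb M α l = 0 := by
  simp [binomialProb, Nat.choose_eq_zero_of_lt h]

lemma sum_binomialProb (M : ℕ) (α : ℝ) : ∑ l ∈ range (M + 1), binomialProb M α l = 1 := by
  have := (add_pow α (1 - α) M).symm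
  rw [add_sub_cancel, one_pow] at this
  rw [← this]
  exact sum_congr rfl fun l _ => by unfold binomialProb; ring

lemma binomialProb_le_one (h0 : 0 ≤ α) (h1 : α ≤ 1) (l : ℕ) : binomialProb M α l ≤ 1 := by
  rcases le_or_gt l M with hl | hl
  · rw [← sum_binomialProb M α]
    exact single_le_sum (fun i _ => binomialProb_nonneg h0 h1 i)
      (mem_range.2 (Nat.lt_succ_of_le hl))
  · rw [binomialProb_of_lt hl]; exact zero_le_one

lemma binomialProb_succ_mul {l : ℕ} (hl : l < M) :
    binomialProb M α (l + 1) * ((l + 1) * (1 - α)) = binomialProb M α l * ((M - l) * α) := by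
  have hchoose : (M.choose (l + 1) : ℝ) * (l + 1) = M.choose l * (M - l) := by
    rw [← Nat.cast_sub hl.le]; exact_mod_cast Nat.choose_succ_right_eq M l
  have hpow : (1 - α) ^ (M - l) = (1 - α) ^ (M - (l + 1)) * (1 - α) := by
    rw [← pow_succ]; congr 1; omega
  unfold binomialProb
  rw [hpow]
  linear_combination α ^ l * α * (1 - α) ^ (M - (l + 1)) * (1 - α) * hchoose

lemma binomialProb_le_succ (h0 : 0 < α) (h1 : α < 1) {l : ℕ} (hl : l < ⌊(M + 1) * α⌋₊) :
    binomialProb M α l ≤ binomialProb M α (l + 1) := by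
  have hmode : (l : ℝ) + 1 ≤ (M + 1) * α := by
    exact_mod_cast (Nat.le_floor_iff (by positivity)).1 hl
  have hlM : l < M := by
    have : (l : ℝ) < M := by nlinarith
    exact_mod_cast this
  refine le_of_mul_le_mul_right ?_ (by nlinarith : (0 : ℝ) < (l + 1) * (1 - α))
  rw [binomialProb_succ_mul hlM]
  exact mul_le_mul_of_nonneg_left (by nlinarith) (binomialProb_nonneg h0.le h1.le l)

lemma binomialProb_succ_le (h0 : 0 < α) (h1 : α < 1) {l : ℕ} (hl : ⌊(M + 1) * α⌋₊ ≤ l) :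
    binomialProb M α (l + 1) ≤ binomialProb M α l := by
  rcases lt_or_ge l M with hlM | hlM
  · have hmode : (M + 1) * α < l + 1 := by
      have := Nat.lt_floor_add_one ((M + 1) * α)
      have : (⌊(M + 1) * α⌋₊ : ℝ) ≤ l := by exact_mod_cast hl
      linarith
    refine le_of_mul_le_mul_right ?_ (by nlinarith : (0 : ℝ) < (l + 1) * (1 - α))
    rw [binomialProb_succ_mul hlM]
    exact mul_le_mul_of_nonneg_left (by nlinarith) (binomialProb_nonneg h0.le h1.le l)
  · rw [binomialProb_of_lt (by omega)]
    exact binomialProb_nonneg h0.le h1.le l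

lemma binomialProb_mul_sqrt_le (h0 : 0 < α) (h1 : α < 1) {a b : ℕ} (ha : a ≠ 0) (hb : b ≠ 0)
    (h2a : (a + b) * α ≤ 2 * a) (h2b : (a + b) * (1 - α) ≤ 2 * b) :
    binomialProb (a + b) α a * √(α * (1 - α) * (a + b)) ≤ 1 := by
  have hβ : 0 < 1 - α := sub_pos.2 h1
  have hkey : √(α * (1 - α) * (a + b)) * √(a + b) ≤ 2 * √(a * b) := by
    rw [← sqrt_mul (by positivity), show 2 * √(a * b) = √(4 * (a * b)) by
      rw [sqrt_mul zero_le_four, show (4 : ℝ) = 2 ^ 2 by norm_num, sqrt_sq zero_le_two]]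
    exact sqrt_le_sqrt (by nlinarith [mul_le_mul h2a h2b (by positivity) (by positivity)])
  calc binomialProb (a + b) α a * √(α * (1 - α) * (a + b))
      ≤ exp 1 / (2 * π) * (√(a + b) / √(a * b)) * √(α * (1 - α) * (a + b)) := by
        gcongr
        unfold binomialProb
        rw [Nat.add_sub_cancel_left]
        exact choose_mul_pow_mul_pow_le ha hb h0.le hβ.le (add_sub_cancel α 1)
    _ = exp 1 / (2 * π) * (√(α * (1 - α) * (a + b)) * √(a + b)) / √(a * b) := by ring
    _ ≤ exp 1 / (2 * π) * (2 * √(a * b)) / √(a * b) := by gcongr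
    _ = exp 1 / π := by field_simp
    _ ≤ 1 := by rw [div_le_one pi_pos]; linarith [exp_one_lt_d9, pi_gt_three]

lemma binomialProb_floor_le (h0 : 0 < α) (h1 : α < 1) (hM : M ≠ 0) :
    binomialProb M α ⌊(M + 1) * α⌋₊ ≤ 1 / (√(α * (1 - α)) * √M) := by
  have ha_le : (⌊(M + 1) * α⌋₊ : ℝ) ≤ (M + 1) * α := Nat.floor_le (by positivity)
  have ha_gt : (M + 1) * α < ⌊(M + 1) * α⌋₊ + 1 := Nat.lt_floor_add_one _
  have haM : ⌊((M : ℝ) + 1) * α⌋₊ ≤ M := by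
    have : (⌊(M + 1) * α⌋₊ : ℝ) < M + 1 := by nlinarith
    exact_mod_cast Nat.lt_succ_iff.1 (by exact_mod_cast this)
  generalize ⌊((M : ℝ) + 1) * α⌋₊ = a at ha_le ha_gt haM ⊢
  rw [le_div_iff₀ (by positivity), ← sqrt_mul (by nlinarith)]
  by_cases hedge : a = 0 ∨ a = M
  · have hvar : α * (1 - α) * M ≤ 1 := by
      rcases hedge with rfl | rfl <;> push_cast at ha_le ha_gt <;> nlinarith
    calc binomialProb M α a * √(α * (1 - α) * M) ≤ 1 * 1 :=
          mul_le_mul (binomialProb_le_one h0.le h1.le a) (sqrt_le_one.2 hvar) (sqrt_nonneg _)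
            zero_le_one
      _ = 1 := one_mul 1
  obtain ⟨b, rfl⟩ : ∃ b, M = a + b := ⟨M - a, by omega⟩
  have ha1 : (1 : ℝ) ≤ a := by exact_mod_cast Nat.one_le_iff_ne_zero.2 (by omega)
  have hb1 : (1 : ℝ) ≤ b := by exact_mod_cast Nat.one_le_iff_ne_zero.2 (by omega)
  push_cast at ha_le ha_gt ⊢
  exact binomialProb_mul_sqrt_le h0 h1 (by omega) (by omega) (by nlinarith) (by nlinarith)

end binomialProb

lemma abs_sum_binomialProb_dvd_add_sub_inv_le {M : ℕ} {α : ℝ} (h0 : 0 < α) (h1 : α < 1)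
    (hM : M ≠ 0) {m : ℕ} (hm : m ≠ 0) (s : ℕ) :
    |∑ l ∈ range (M + 1) with m ∣ l + s, binomialProb M α l - 1 / m|
      ≤ 2 / (√(α * (1 - α)) * √M) := by
  have hext : ∀ g : ℕ → ℝ, (∀ l, M < l → g l = 0) →
      ∑ l ∈ range (M + 1), g l = ∑ l ∈ range ((M + 1) * m), g l := fun g hg =>
    sum_subset (range_subset_range.2 (Nat.le_mul_of_pos_right _ (Nat.pos_of_ne_zero hm)))
      fun l _ hl => hg l (by simpa using hl)
  have htotal : ∑ l ∈ range ((M + 1) * m), binomialProb M α l = 1 := by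
    rw [← hext _ fun l hl => binomialProb_of_lt hl, sum_binomialProb]
  calc _ = |∑ l ∈ range ((M + 1) * m), (if m ∣ l + s then binomialProb M α l else 0)
          - (∑ l ∈ range ((M + 1) * m), binomialProb M α l) / m| := by
        rw [htotal, sum_filter, hext _ fun l hl => by rw [binomialProb_of_lt hl, ite_self]]
    _ ≤ ∑ l ∈ range ((M + 1) * m), |binomialProb M α (l + 1) - binomialProb M α l| :=
        abs_sum_dvd_add_sub_average_le _ hm s _
    _ ≤ 2 * binomialProb M α ⌊(M + 1) * α⌋₊ :=
        sum_abs_sub_le_two_mul_of_unimodal (binomialProb_nonneg h0.le h1.le)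
          (fun _ hl => binomialProb_le_succ h0 h1 hl) (fun _ hl => binomialProb_succ_le h0 h1 hl) _
    _ ≤ 2 * (1 / (√(α * (1 - α)) * √M)) := by gcongr; exact binomialProb_floor_le h0 h1 hM
    _ = 2 / (√(α * (1 - α)) * √M) := mul_one_div _ _

lemma sum_divisors_moebius_eq_ite (n : ℕ) :
    ∑ d ∈ n.divisors, (μ d : ℝ) = if n = 1 then 1 else 0 := by
  have := congrArg (fun f => f n) (coe_moebius_mul_coe_zeta (R := ℝ))
  simpa only [coe_mul_zeta_apply, one_apply, intCoe_apply] using this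

lemma ite_gcd_mul_eq_sum_divisors_moebius {k n : ℕ} (hk : k ≠ 0) (hn : n ≠ 0) (u : ℕ) :
    (if Nat.gcd u (k * n) = k then 1 else 0 : ℝ)
      = ∑ d ∈ n.divisors, if k * d ∣ u then (μ d : ℝ) else 0 := by
  by_cases hku : k ∣ u
  · obtain ⟨v, rfl⟩ := hku
    have hfilter : {d ∈ n.divisors | d ∣ v} = (Nat.gcd n v).divisors := by
      ext d; simp [Nat.dvd_gcd_iff, hn]
    simp_rw [Nat.gcd_mul_left, mul_dvd_mul_iff_left hk, ← sum_filter, hfilter,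
      sum_divisors_moebius_eq_ite, Nat.gcd_comm v n]
    simp [hk]
  · rw [if_neg fun h : Nat.gcd u (k * n) = k => hku (h ▸ Nat.gcd_dvd_left u _)]
    exact (sum_eq_zero fun d _ => if_neg fun h => hku ((dvd_mul_right k d).trans h)).symm

lemma sum_filter_gcd_mul_eq_sum_divisors_moebius {ι : Type*} {k n : ℕ} (hk : k ≠ 0)
    (hn : n ≠ 0) (L : Finset ι) (u : ι → ℕ) (w : ι → ℝ) :
    ∑ i ∈ L with Nat.gcd (u i) (k * n) = k, w i
      = ∑ d ∈ n.divisors, (μ d : ℝ) * ∑ i ∈ L with k * d ∣ u i, w i := by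
  calc ∑ i ∈ L with Nat.gcd (u i) (k * n) = k, w i
      = ∑ i ∈ L, (if Nat.gcd (u i) (k * n) = k then 1 else 0 : ℝ) * w i := by
        rw [sum_filter]; simp_rw [ite_mul, one_mul, zero_mul]
    _ = ∑ i ∈ L, ∑ d ∈ n.divisors, (if k * d ∣ u i then (μ d : ℝ) else 0) * w i := by
        simp_rw [ite_gcd_mul_eq_sum_divisors_moebius hk hn, sum_mul]
    _ = ∑ d ∈ n.divisors, (μ d : ℝ) * ∑ i ∈ L with k * d ∣ u i, w i := by
        rw [sum_comm]; simp_rw [sum_filter, mul_sum, ite_mul, zero_mul, mul_ite, mul_zero]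

lemma abs_sum_moebius_mul_le {D : Finset ℕ} {e : ℕ → ℝ} {B : ℝ} (he : ∀ d ∈ D, |e d| ≤ B) :
    |∑ d ∈ D, (μ d : ℝ) * e d| ≤ #D * B := by
  calc |∑ d ∈ D, (μ d : ℝ) * e d| ≤ ∑ d ∈ D, |(μ d : ℝ)| * |e d| := by
        simp only [← abs_mul]; exact abs_sum_le_sum_abs _ _
    _ ≤ ∑ _d ∈ D, 1 * B := by
        gcongr with d hd
        · exact_mod_cast abs_moebius_le_one
        · exact he d hd
    _ = #D * B := by rw [sum_const, nsmul_eq_mul, one_mul]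

/-- **Binomial probabilities on `gcd = k` sets.**  There is an absolute constant
`C > 0` such that for every `α ∈ (0,1)`, every `k ≥ 1`, all `s, t ≥ 0` and every
`M ≥ 1`, the sum of `C(M,l)α^l(1−α)^{M−l}` over `0 ≤ l ≤ M` with `gcd(l+s, M+t) = k`
differs from `g_k(M+t)·(1/k)·∑_{kd ∣ M+t} μ(d)/d` by at most
`C·g_k(M+t)·τ((M+t)/k)/(√(α(1−α))·√M)`, where `g_k(n)` is the indicator that `k ∣ n`. -/
theorem binomial_probabilities_gcd_eq_k_sum :
    ∃ C : ℝ, 0 < C ∧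
      ∀ (α : ℝ), 0 < α → α < 1 →
      ∀ (k : ℕ), 1 ≤ k →
      ∀ (s t M : ℕ), 1 ≤ M →
        |(∑ l ∈ (Finset.range (M + 1)).filter
              (fun l => Nat.gcd (l + s) (M + t) = k),
            (M.choose l : ℝ) * α ^ l * (1 - α) ^ (M - l)) -
          (if k ∣ M + t then (1 : ℝ) else 0) * (1 / (k : ℝ)) *
            ∑ d ∈ (M + t).divisors.filter (fun d => k * d ∣ M + t),
              (ArithmeticFunction.moebius d : ℝ) / (d : ℝ)|
          ≤ C * (if k ∣ M + t then (1 : ℝ) else 0) * (((M + t) / k).divisors.card : ℝ) /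
              (Real.sqrt (α * (1 - α)) * Real.sqrt M) := by
  refine ⟨2, two_pos, fun α h0 h1 k hk s t M hM => ?_⟩
  by_cases hkN : k ∣ M + t
  swap
  · have hempty : {l ∈ range (M + 1) | Nat.gcd (l + s) (M + t) = k} = ∅ :=
      filter_eq_empty_iff.2 fun l _ h => hkN (h ▸ Nat.gcd_dvd_right _ _)
    simp [hempty, hkN]
  obtain ⟨n, hn⟩ := hkN
  have hk0 : k ≠ 0 := by omega
  have hn0 : n ≠ 0 := by rintro rfl; omega
  have hdivisors : {d ∈ (k * n).divisors | k * d ∣ k * n} = n.divisors := by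
    ext d; simpa [mul_dvd_mul_iff_left hk0, hk0, hn0] using fun h => Dvd.dvd.mul_left h k
  rw [hn, if_pos (dvd_mul_right k n), Nat.mul_div_cancel_left n (Nat.pos_of_ne_zero hk0),
    hdivisors, sum_filter_gcd_mul_eq_sum_divisors_moebius hk0 hn0 _ (· + s), one_mul, mul_one,
    mul_sum, ← sum_sub_distrib]
  calc _ = |∑ d ∈ n.divisors, (μ d : ℝ) *
          (∑ l ∈ range (M + 1) with k * d ∣ l + s, binomialProb M α l - 1 / ↑(k * d))| := by
        congr 1; refine sum_congr rfl fun d _ => ?_; push_cast; unfold binomialProb; ring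
    _ ≤ #n.divisors * (2 / (√(α * (1 - α)) * √M)) := abs_sum_moebius_mul_le fun d hd =>
        abs_sum_binomialProb_dvd_add_sub_inv_le h0 h1 (by omega)
          (mul_ne_zero hk0 (Nat.pos_of_mem_divisors hd).ne') s
    _ = _ := by ring
end

section
/- For every integer c ≥ 1: lim_{N→∞} (1/N²)·#{(n,m) : 0 ≤ n,m ≤ N and gcd(1+nc, 1+mc) = 1} = Δ(c), where Δ(c) = Σ_{d ≥ 1, gcd(d,c)=1} μ(d)/d². -/
open Filter Finset ArithmeticFunction
open scoped ArithmeticFunction.Moebius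

/-!
By Möbius inversion, the number of visible grid points is `∑_d μ(d) A_d(N)²`, where
`A_d(N) = countDvd c d N` counts the `n ≤ N` with `d ∣ 1 + n c`. For `d` coprime to `c` these `n` form one residue class
mod `d`, so `A_d(N) / N → 1 / d`; otherwise `A_d(N) = 0`. Since `A_d(N)` vanishes for
`d > N c + 1`, also `A_d(N) / N ≤ (c + 3) / d`, and dominated convergence lets the limit pass
through the sum.
-/

theorem sum_divisors_moebius (n : ℕ) : ∑ d ∈ n.divisors, (μ d : ℤ) = if n = 1 then 1 else 0 := by
  simpa only [coe_mul_zeta_apply, one_apply] using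
    congrArg (fun f : ArithmeticFunction ℤ => f n) moebius_mul_coe_zeta

theorem card_filter_coprime_eq_sum_moebius {ι : Type*} (s : Finset ι) (f g : ι → ℕ) (B : ℕ)
    (hf : ∀ x ∈ s, 0 < f x ∧ f x < B) :
    (#{x ∈ s | Nat.gcd (f x) (g x) = 1} : ℤ) =
      ∑ d ∈ range B, μ d * #{x ∈ s | d ∣ f x ∧ d ∣ g x} := by
  have hdivisors : ∀ x ∈ s,
      {d ∈ range B | d ∣ f x ∧ d ∣ g x} = (Nat.gcd (f x) (g x)).divisors := by
    intro x hx
    ext d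
    simp only [mem_filter, mem_range, Nat.mem_divisors, Nat.dvd_gcd_iff, ne_eq,
      Nat.gcd_eq_zero_iff, not_and]
    obtain ⟨hpos, hlt⟩ := hf x hx
    constructor
    · rintro ⟨-, hdiv⟩
      exact ⟨hdiv, by omega⟩
    · rintro ⟨⟨hdf, hdg⟩, -⟩
      exact ⟨(Nat.le_of_dvd hpos hdf).trans_lt hlt, hdf, hdg⟩
  calc (#{x ∈ s | Nat.gcd (f x) (g x) = 1} : ℤ)
      = ∑ x ∈ s, ∑ d ∈ range B, if d ∣ f x ∧ d ∣ g x then (μ d : ℤ) else 0 := by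
        rw [card_filter, Nat.cast_sum]
        refine sum_congr rfl fun x hx => ?_
        rw [← sum_filter, hdivisors x hx, sum_divisors_moebius]
        split_ifs <;> rfl
    _ = ∑ d ∈ range B, μ d * #{x ∈ s | d ∣ f x ∧ d ∣ g x} := by
        rw [sum_comm]
        refine sum_congr rfl fun d _ => ?_
        rw [← sum_filter, sum_const, nsmul_eq_mul, mul_comm]

def countDvd (c d N : ℕ) : ℕ := #{n ∈ range (N + 1) | d ∣ 1 + n * c}

theorem card_visible_eq_sum_moebius (c N : ℕ) :
    (#{p ∈ range (N + 1) ×ˢ range (N + 1) | Nat.gcd (1 + p.1 * c) (1 + p.2 * c) = 1} : ℤ) =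
      ∑ d ∈ range (N * c + 2), μ d * (countDvd c d N : ℤ) ^ 2 := by
  rw [card_filter_coprime_eq_sum_moebius _ _ _ (N * c + 2)]
  · refine sum_congr rfl fun d _ => ?_
    rw [filter_product (p := fun n => d ∣ 1 + n * c) (q := fun n => d ∣ 1 + n * c),
      card_product, countDvd]
    push_cast
    ring
  · intro p hp
    have : p.1 * c ≤ N * c := Nat.mul_le_mul_right c (by simp at hp; omega)
    omega

theorem countDvd_eq_zero_of_not_coprime {c d : ℕ} (h : ¬ Nat.Coprime d c) (N : ℕ) :
    countDvd c d N = 0 := by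
  refine card_eq_zero.mpr (filter_eq_empty_iff.mpr fun n _ hdvd => h ?_)
  exact Nat.Coprime.coprime_dvd_left hdvd (by simp [Nat.coprime_add_mul_right_left])

theorem countDvd_zero (c N : ℕ) : countDvd c 0 N = 0 :=
  card_eq_zero.mpr (filter_eq_empty_iff.mpr fun n _ hdvd => by simp at hdvd)

theorem countDvd_eq_zero_of_lt {c d N : ℕ} (h : N * c + 1 < d) : countDvd c d N = 0 := by
  refine card_eq_zero.mpr (filter_eq_empty_iff.mpr fun n hn hdvd => ?_)
  have : n * c ≤ N * c := Nat.mul_le_mul_right c (by simp at hn; omega)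
  have := Nat.le_of_dvd (by omega) hdvd
  omega

theorem exists_dvd_one_add_mul_iff_modEq {c d : ℕ} (hd : 0 < d) (h : Nat.Coprime d c) :
    ∃ v, ∀ n, d ∣ 1 + n * c ↔ n ≡ v [MOD d] := by
  have : NeZero d := ⟨hd.ne'⟩
  have hinv : (c : ZMod d) * (c : ZMod d)⁻¹ = 1 := ZMod.coe_mul_inv_eq_one c h.symm
  refine ⟨(-(c : ZMod d)⁻¹).val, fun n => ?_⟩
  rw [← ZMod.natCast_eq_zero_iff, ← ZMod.natCast_eq_natCast_iff, ZMod.natCast_zmod_val]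
  push_cast
  constructor
  · intro hn
    linear_combination (c : ZMod d)⁻¹ * hn - (n : ZMod d) * hinv
  · intro hn
    linear_combination (c : ZMod d) * hn - hinv

theorem countDvd_mul_bounds {c d : ℕ} (hd : 0 < d) (h : Nat.Coprime d c) (N : ℕ) :
    N + 1 < d * countDvd c d N + d ∧ d * countDvd c d N ≤ N + 1 + d := by
  obtain ⟨v, hv⟩ := exists_dvd_one_add_mul_iff_modEq hd h
  have hcount : countDvd c d N = (N + 1) / d + if v % d < (N + 1) % d then 1 else 0 := by
    rw [← Nat.count_modEq_card (N + 1) hd v, Nat.count_eq_card_filter_range, countDvd]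
    exact congrArg card (filter_congr fun n _ => hv n)
  have hdiv := Nat.div_add_mod (N + 1) d
  have hmod := Nat.mod_lt (N + 1) hd
  rw [hcount, mul_add]
  split_ifs <;> omega

theorem countDvd_mul_le (c d : ℕ) {N : ℕ} (hN : 1 ≤ N) : countDvd c d N * d ≤ (c + 3) * N := by
  by_cases hzero : countDvd c d N = 0
  · simp [hzero]
  have hd : 0 < d := Nat.pos_of_ne_zero fun h => hzero (h ▸ countDvd_zero c N)
  have hcop : Nat.Coprime d c := by_contra fun h => hzero (countDvd_eq_zero_of_not_coprime h N)
  have hdle : d ≤ N * c + 1 := by_contra fun h => hzero (countDvd_eq_zero_of_lt (by omega))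
  have := (countDvd_mul_bounds hd hcop N).2
  nlinarith

theorem tendsto_countDvd_div {c d : ℕ} (hd : 0 < d) (h : Nat.Coprime d c) :
    Tendsto (fun N : ℕ => (countDvd c d N : ℝ) / N) atTop (nhds (1 / d)) := by
  have hd' : (0 : ℝ) < d := by exact_mod_cast hd
  rw [← tendsto_sub_nhds_zero_iff]
  refine squeeze_zero_norm' ?_ (tendsto_const_div_atTop_nhds_zero_nat 2)
  filter_upwards [eventually_ge_atTop 1] with N hN
  have hN' : (0 : ℝ) < N := by exact_mod_cast hN
  obtain ⟨hlo, hhi⟩ := countDvd_mul_bounds hd h N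
  have hlo' : (N : ℝ) + 1 < d * countDvd c d N + d := by exact_mod_cast hlo
  have hhi' : (d : ℝ) * countDvd c d N ≤ N + 1 + d := by exact_mod_cast hhi
  have hd1 : (1 : ℝ) ≤ d := by exact_mod_cast hd
  have hdiff : (countDvd c d N : ℝ) / N - 1 / d = (d * countDvd c d N - N) / (d * N) := by
    field_simp
  rw [Real.norm_eq_abs, hdiff, abs_div, abs_of_pos (a := (d : ℝ) * N) (by positivity),
    div_le_div_iff₀ (by positivity) hN']
  have hnum : |(d : ℝ) * countDvd c d N - N| ≤ 2 * d := abs_le.mpr ⟨by linarith, by linarith⟩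
  nlinarith

theorem tendsto_tsum_moebius_mul_sq_countDvd_div (c : ℕ) :
    Tendsto (fun N : ℕ => ∑' d : ℕ, (μ d : ℝ) * ((countDvd c d N : ℝ) / N) ^ 2) atTop
      (nhds (∑' d : ℕ, if 1 ≤ d ∧ Nat.gcd d c = 1 then (μ d : ℝ) / (d : ℝ) ^ 2 else 0)) := by
  refine tendsto_tsum_of_dominated_convergence
    (bound := fun d : ℕ => ((c : ℝ) + 3) ^ 2 * (1 / (d : ℝ) ^ 2))
    ((Real.summable_one_div_nat_pow.mpr one_lt_two).mul_left _) (fun d => ?_) ?_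
  · by_cases hd : 1 ≤ d ∧ Nat.gcd d c = 1
    · rw [if_pos hd, div_eq_mul_one_div, ← one_div_pow]
      exact ((tendsto_countDvd_div hd.1 hd.2).pow 2).const_mul _
    · have hzero : ∀ N, countDvd c d N = 0 := by
        rcases Nat.eq_zero_or_pos d with rfl | hpos
        · exact countDvd_zero c
        · exact countDvd_eq_zero_of_not_coprime fun h => hd ⟨hpos, h⟩
      simp [hd, hzero]
  · filter_upwards [eventually_ge_atTop 1] with N hN d
    have hN' : (0 : ℝ) < N := by exact_mod_cast hN
    have hmu : ‖(μ d : ℝ)‖ ≤ 1 := by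
      rw [Real.norm_eq_abs]; exact_mod_cast abs_moebius_le_one
    have hratio : (countDvd c d N : ℝ) / N * d ≤ c + 3 := by
      rw [div_mul_eq_mul_div, div_le_iff₀ hN']
      exact_mod_cast countDvd_mul_le c d hN
    rw [norm_mul, norm_pow, Real.norm_of_nonneg (r := (countDvd c d N : ℝ) / N) (by positivity)]
    calc ‖(μ d : ℝ)‖ * ((countDvd c d N : ℝ) / N) ^ 2
        ≤ 1 * ((countDvd c d N : ℝ) / N) ^ 2 := by gcongr
      _ ≤ ((c : ℝ) + 3) ^ 2 * (1 / (d : ℝ) ^ 2) := by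
        rcases Nat.eq_zero_or_pos d with rfl | hd
        · simp [countDvd_zero]
        · have hd' : (0 : ℝ) < d := by exact_mod_cast hd
          rw [one_mul, mul_one_div, le_div_iff₀ (by positivity), ← mul_pow]
          gcongr

theorem card_visible_div_sq_eq_tsum (c : ℕ) {N : ℕ} (hN : 0 < N) :
    (#{p ∈ range (N + 1) ×ˢ range (N + 1) | Nat.gcd (1 + p.1 * c) (1 + p.2 * c) = 1} : ℝ) /
        (N : ℝ) ^ 2 =
      ∑' d : ℕ, (μ d : ℝ) * ((countDvd c d N : ℝ) / N) ^ 2 := by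
  have hN' : (N : ℝ) ≠ 0 := by exact_mod_cast hN.ne'
  rw [tsum_eq_sum (s := range (N * c + 2)) fun d hd => by
    rw [countDvd_eq_zero_of_lt (by simp at hd; omega)]; simp]
  have hcard := congrArg (fun x : ℤ => (x : ℝ)) (card_visible_eq_sum_moebius c N)
  push_cast at hcard
  rw [hcard, sum_div]
  refine sum_congr rfl fun d _ => ?_
  field_simp

theorem density_visible_points_on_grid_general (c : ℕ) :
    Tendsto (fun N : ℕ =>
        (((Finset.range (N + 1) ×ˢ Finset.range (N + 1)).filter
            (fun p => Nat.gcd (1 + p.1 * c) (1 + p.2 * c) = 1)).card : ℝ) / (N : ℝ) ^ 2)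
      atTop
      (nhds (∑' d : ℕ, if 1 ≤ d ∧ Nat.gcd d c = 1 then
        (ArithmeticFunction.moebius d : ℝ) / (d : ℝ) ^ 2 else 0)) := by
  refine (tendsto_tsum_moebius_mul_sq_countDvd_div c).congr' ?_
  filter_upwards [eventually_gt_atTop 0] with N hN
  exact (card_visible_div_sq_eq_tsum c hN).symm

/-- **An extension of Dirichlet's density theorem.**  For every integer `c ≥ 1`,
the density of pairs `(n,m)` with `0 ≤ n,m ≤ N` such that `gcd(1+nc, 1+mc) = 1`
converges, as `N → ∞`, to `Δ(c) = ∑_{d ≥ 1, gcd(d,c)=1} μ(d)/d²`. -/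
theorem density_visible_points_on_grid (c : ℕ) (hc : 1 ≤ c) :
    Tendsto (fun N : ℕ =>
        (((Finset.range (N + 1) ×ˢ Finset.range (N + 1)).filter
            (fun p => Nat.gcd (1 + p.1 * c) (1 + p.2 * c) = 1)).card : ℝ) / (N : ℝ) ^ 2)
      atTop
      (nhds (∑' d : ℕ, if 1 ≤ d ∧ Nat.gcd d c = 1 then
        (ArithmeticFunction.moebius d : ℝ) / (d : ℝ) ^ 2 else 0)) :=
  density_visible_points_on_grid_general c
end

section
/- There is an absolute constant C > 0 such that for all integers n ≥ 1 and c,d ≥ 1 with gcd(c,d) = 1, every r ∈ ℤ, and every α ∈ (0,1): |Σ_{0 ≤ l ≤ n, l·c ≡ r (mod d)} C(n,l)·α^l·(1−α)^{n−l} − 1/d| ≤ C/(√(α(1−α))·√n). -/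
/-!
Fourier inversion on `ZMod d` with the standard character `ψ` writes the sum as
`d⁻¹ ∑ⱼ ψ(-jr) (α ψ(jc) + 1 - α)ⁿ`; the frequency `j = 0` contributes exactly `1/d`, and since
`c` is a unit mod `d` the remaining frequencies are a permutation of the nonzero `j`.
For `ψ(j) = e^{iθ}` one has `|α e^{iθ} + 1 - α|² = 1 - 4α(1-α) sin²(θ/2)`, and Jordan's
inequality `|sin(πv/d)| ≥ 2|v|/d` for the symmetric representative `v` of `j` bounds the
`n`-th power by the Gaussian `exp(-8α(1-α)n v²/d²)`. A Gaussian sum `∑_{k ≥ 1} e^{-ak²}` is at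
most `e/(2√a)`, which gives the bound with `C = 1` since `e < √8`.
-/

open Finset Real

lemma sum_Ico_exp_neg_mul_le {b : ℝ} (hb : 0 < b) (N : ℕ) :
    ∑ k ∈ Ico 1 N, exp (-(b * k)) ≤ 1 / b := by
  calc ∑ k ∈ Ico 1 N, exp (-(b * k)) = ∑ k ∈ Ico 1 N, exp (-b) ^ k := by
        refine sum_congr rfl fun k _ => ?_
        rw [← exp_nat_mul]
        ring_nf
    _ ≤ exp (-b) ^ 1 / (1 - exp (-b)) :=
        geom_sum_Ico_le_of_lt_one (exp_pos _).le (exp_lt_one_iff.mpr (neg_lt_zero.mpr hb))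
    _ = 1 / (exp b - 1) := by
        rw [exp_neg]
        field_simp [(exp_pos b).ne']
    _ ≤ 1 / b := one_div_le_one_div_of_le hb (by linarith [add_one_le_exp b])

lemma sum_Ico_exp_neg_mul_sq_le {a : ℝ} (ha : 0 < a) (N : ℕ) :
    ∑ k ∈ Ico 1 N, exp (-(a * k ^ 2)) ≤ exp 1 / (2 * √a) := by
  calc ∑ k ∈ Ico 1 N, exp (-(a * k ^ 2))
      ≤ ∑ k ∈ Ico 1 N, exp 1 * exp (-(2 * √a * k)) := by
        refine sum_le_sum fun k _ => ?_
        rw [← exp_add, exp_le_exp]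
        nlinarith [sq_nonneg (√a * k - 1), sq_sqrt ha.le]
    _ = exp 1 * ∑ k ∈ Ico 1 N, exp (-(2 * √a * k)) := (mul_sum ..).symm
    _ ≤ exp 1 * (1 / (2 * √a)) := by
        gcongr
        exact sum_Ico_exp_neg_mul_le (by positivity) N
    _ = exp 1 / (2 * √a) := by ring

lemma norm_sq_ofReal_mul_exp_add_one_sub (α θ : ℝ) :
    ‖(α : ℂ) * Complex.exp (θ * Complex.I) + (1 - α)‖ ^ 2
      = 1 - 4 * (α * (1 - α)) * sin (θ / 2) ^ 2 := by
  rw [Complex.sq_norm, Complex.normSq_apply]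
  simp only [Complex.add_re, Complex.add_im, Complex.re_ofReal_mul, Complex.im_ofReal_mul,
    Complex.exp_ofReal_mul_I_re, Complex.exp_ofReal_mul_I_im, Complex.sub_re, Complex.sub_im,
    Complex.one_re, Complex.one_im, Complex.ofReal_re, Complex.ofReal_im, sub_zero, add_zero]
  rw [sin_sq_eq_half_sub, mul_div_cancel₀ θ two_ne_zero]
  linear_combination α ^ 2 * sin_sq_add_cos_sq θ

lemma norm_ofReal_mul_exp_add_one_sub_pow_le (α θ : ℝ) (n : ℕ) :
    ‖(α : ℂ) * Complex.exp (θ * Complex.I) + (1 - α)‖ ^ n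
      ≤ exp (-(2 * n * (α * (1 - α)) * sin (θ / 2) ^ 2)) := by
  set s := α * (1 - α) * sin (θ / 2) ^ 2
  have hnorm : ‖(α : ℂ) * Complex.exp (θ * Complex.I) + (1 - α)‖ ≤ exp (-(2 * s)) := by
    refine le_of_pow_le_pow_left₀ two_ne_zero (exp_pos _).le ?_
    rw [norm_sq_ofReal_mul_exp_add_one_sub, ← exp_nat_mul]
    linarith [add_one_le_exp (2 * -(2 * s))]
  calc _ ≤ exp (-(2 * s)) ^ n := pow_le_pow_left₀ (norm_nonneg _) hnorm n
    _ = _ := by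
        rw [← exp_nat_mul]
        congr 1
        ring

lemma sum_erase_zero_units_mul {R M : Type*} [Ring R] [Fintype R] [DecidableEq R]
    [AddCommMonoid M] (u : Rˣ) (f : R → M) :
    ∑ x ∈ univ.erase 0, f (u * x) = ∑ x ∈ univ.erase 0, f x :=
  sum_nbij' (u * ·) (↑u⁻¹ * ·) (by simp) (by simp) (by simp) (by simp) (by simp)

namespace ZMod

variable {d : ℕ} [NeZero d]

lemma sum_erase_zero_val {M : Type*} [AddCommMonoid M] (f : ℕ → M) :
    ∑ x ∈ univ.erase (0 : ZMod d), f x.val = ∑ k ∈ Ico 1 d, f k := by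
  refine sum_nbij' val (fun k => (k : ZMod d)) ?_ ?_ ?_ ?_ (by simp)
  · intro x hx
    simp only [mem_erase, mem_univ, and_true, mem_Ico] at hx ⊢
    exact ⟨Nat.one_le_iff_ne_zero.mpr ((val_ne_zero x).mpr hx), x.val_lt⟩
  · intro k hk
    simp only [mem_Ico, mem_erase, mem_univ, and_true] at hk ⊢
    rw [Ne, ← val_eq_zero, val_cast_of_lt hk.2]
    omega
  · intro x _
    exact natCast_zmod_val x
  · intro k hk
    exact val_cast_of_lt (mem_Ico.mp hk).2

lemma sum_erase_zero_exp_neg_mul_valMinAbs_sq_le (a : ℝ) :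
    ∑ x ∈ univ.erase (0 : ZMod d), exp (-(a * (x.valMinAbs : ℝ) ^ 2))
      ≤ 2 * ∑ k ∈ Ico 1 d, exp (-(a * (k : ℝ) ^ 2)) := by
  set F : ℕ → ℝ := fun k => exp (-(a * (k : ℝ) ^ 2))
  have hterm (x : ZMod d) : exp (-(a * (x.valMinAbs : ℝ) ^ 2)) ≤ F x.val + F (d - x.val) := by
    have hmin : (x.valMinAbs : ℝ) ^ 2 = ((min x.val (d - x.val) : ℕ) : ℝ) ^ 2 := by
      rw [← valMinAbs_natAbs_eq_min, Nat.cast_natAbs, Int.cast_abs, sq_abs]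
    rw [hmin]
    rcases min_choice x.val (d - x.val) with h | h <;> rw [h]
    · linarith [exp_pos (-(a * ((d - x.val : ℕ) : ℝ) ^ 2))]
    · linarith [exp_pos (-(a * (x.val : ℝ) ^ 2))]
  calc _ ≤ ∑ x ∈ univ.erase (0 : ZMod d), (F x.val + F (d - x.val)) :=
        sum_le_sum fun x _ => hterm x
    _ = ∑ k ∈ Ico 1 d, F k + ∑ k ∈ Ico 1 d, F (d - k) := by
        rw [sum_add_distrib, sum_erase_zero_val F, sum_erase_zero_val (fun k => F (d - k))]
    _ = 2 * ∑ k ∈ Ico 1 d, F k := by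
        rw [sum_Ico_reflect F 1 (Nat.le_succ d), Nat.add_sub_cancel_left, Nat.add_sub_cancel,
          two_mul]

lemma sq_two_mul_valMinAbs_div_le_sin_sq (x : ZMod d) :
    (2 * x.valMinAbs / d : ℝ) ^ 2 ≤ sin (π * x.valMinAbs / d) ^ 2 := by
  have hd : (0 : ℝ) < d := by exact_mod_cast Nat.pos_of_ne_zero (NeZero.ne d)
  have hv : |(x.valMinAbs : ℝ)| * 2 ≤ d := by
    obtain ⟨h₁, h₂⟩ := x.valMinAbs_mem_Ioc
    have h₁' : (-d : ℝ) < x.valMinAbs * 2 := by exact_mod_cast h₁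
    have h₂' : (x.valMinAbs * 2 : ℝ) ≤ d := by exact_mod_cast h₂
    cases abs_cases (x.valMinAbs : ℝ) <;> linarith
  have hjordan := mul_abs_le_abs_sin (x := π * x.valMinAbs / d) (by
    rw [abs_div, abs_mul, abs_of_pos pi_pos, abs_of_pos hd, div_le_div_iff₀ hd two_pos]
    nlinarith [pi_pos])
  rw [← sq_abs, ← sq_abs (sin _)]
  refine pow_le_pow_left₀ (abs_nonneg _) (le_trans (le_of_eq ?_) hjordan) 2
  rw [abs_div, abs_mul, abs_div, abs_mul, abs_of_pos pi_pos, abs_of_pos hd, abs_two]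
  field_simp

lemma norm_ofReal_mul_stdAddChar_add_one_sub_pow_le {α : ℝ} (hα : 0 ≤ α * (1 - α)) (n : ℕ)
    (x : ZMod d) :
    ‖(α : ℂ) * stdAddChar x + (1 - α)‖ ^ n
      ≤ exp (-(8 * (α * (1 - α)) * n / d ^ 2 * (x.valMinAbs : ℝ) ^ 2)) := by
  have hψ : stdAddChar x = Complex.exp ((2 * π * x.valMinAbs / d : ℝ) * Complex.I) := by
    rw [← coe_valMinAbs x, stdAddChar_coe, coe_valMinAbs]
    push_cast
    ring_nf
  rw [hψ]
  refine (norm_ofReal_mul_exp_add_one_sub_pow_le α _ n).trans (exp_le_exp.mpr (neg_le_neg ?_))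
  have hsin := x.sq_two_mul_valMinAbs_div_le_sin_sq
  rw [show 2 * π * x.valMinAbs / d / 2 = π * x.valMinAbs / d by ring]
  calc 8 * (α * (1 - α)) * n / d ^ 2 * (x.valMinAbs : ℝ) ^ 2
      = 2 * n * (α * (1 - α)) * (2 * x.valMinAbs / d : ℝ) ^ 2 := by ring
    _ ≤ _ := by gcongr

end ZMod

section Fourier

variable {d : ℕ} [NeZero d] {ψ : AddChar (ZMod d) ℂ}

lemma ite_intModEq_eq_sum_addChar (hψ : ψ.IsPrimitive) (a r : ℤ) :
    (if a ≡ r [ZMOD d] then 1 else 0 : ℂ) = (d : ℂ)⁻¹ * ∑ j : ZMod d, ψ (j * (a - r)) := by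
  rw [AddChar.sum_mulShift _ hψ, ZMod.card]
  simp only [sub_eq_zero, ZMod.intCast_eq_intCast_iff]
  split_ifs <;> simp

lemma sum_filter_binomial_eq_sum_addChar (hψ : ψ.IsPrimitive) (n c : ℕ) (r : ℤ) (α : ℝ) :
    (((∑ l ∈ (range (n + 1)).filter (fun l : ℕ => (l : ℤ) * c ≡ r [ZMOD d]),
        (n.choose l : ℝ) * α ^ l * (1 - α) ^ (n - l) : ℝ)) : ℂ)
      = (d : ℂ)⁻¹ * ∑ j : ZMod d, ψ (-(j * r)) * (α * ψ (j * c) + (1 - α)) ^ n := by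
  have hchar (j : ZMod d) (l : ℕ) :
      ψ (j * ((l * c : ℤ) - r)) = ψ (j * c) ^ l * ψ (-(j * r)) := by
    rw [← AddChar.map_nsmul_eq_pow, ← AddChar.map_add_eq_mul]
    congr 1
    push_cast
    ring
  push_cast
  rw [sum_filter]
  calc _ = ∑ l ∈ range (n + 1), (n.choose l : ℂ) * α ^ l * (1 - α) ^ (n - l) *
        ((d : ℂ)⁻¹ * ∑ j : ZMod d, ψ (j * ((l * c : ℤ) - r))) := by
        refine sum_congr rfl fun l _ => ?_
        rw [← ite_intModEq_eq_sum_addChar hψ, mul_boole]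
    _ = (d : ℂ)⁻¹ * ∑ j : ZMod d, ψ (-(j * r)) * ∑ l ∈ range (n + 1),
        (α * ψ (j * c)) ^ l * (1 - α) ^ (n - l) * n.choose l := by
        simp_rw [hchar, mul_sum]
        rw [sum_comm]
        refine sum_congr rfl fun j _ => sum_congr rfl fun l _ => ?_
        ring
    _ = _ := by simp_rw [add_pow]

lemma abs_sum_filter_binomial_sub_le (hψ : ψ.IsPrimitive) (n : ℕ) {c : ℕ} (hcd : c.Coprime d)
    (r : ℤ) (α : ℝ) :
    |(∑ l ∈ (range (n + 1)).filter (fun l : ℕ => (l : ℤ) * c ≡ r [ZMOD d]),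
        (n.choose l : ℝ) * α ^ l * (1 - α) ^ (n - l)) - 1 / (d : ℝ)|
      ≤ (d : ℝ)⁻¹ * ∑ x ∈ univ.erase 0, ‖(α : ℂ) * ψ x + (1 - α)‖ ^ n := by
  set u := ZMod.unitOfCoprime c hcd
  have hfourier : (((∑ l ∈ (range (n + 1)).filter (fun l : ℕ => (l : ℤ) * c ≡ r [ZMOD d]),
        (n.choose l : ℝ) * α ^ l * (1 - α) ^ (n - l)) - 1 / (d : ℝ) : ℝ) : ℂ)
      = (d : ℂ)⁻¹ * ∑ j ∈ univ.erase 0, ψ (-(j * r)) * (α * ψ (u * j) + (1 - α)) ^ n := by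
    rw [Complex.ofReal_sub, sum_filter_binomial_eq_sum_addChar hψ,
      ← add_sum_erase _ _ (mem_univ 0)]
    simp only [zero_mul, neg_zero, AddChar.map_zero_eq_one, mul_one, add_sub_cancel, one_pow,
      u, ZMod.coe_unitOfCoprime, mul_comm (c : ZMod d), Complex.ofReal_div, Complex.ofReal_one,
      Complex.ofReal_natCast]
    ring
  rw [← Real.norm_eq_abs, ← Complex.norm_real, hfourier, norm_mul, norm_inv,
    Complex.norm_natCast, ← sum_erase_zero_units_mul u (fun x => ‖(α : ℂ) * ψ x + (1 - α)‖ ^ n)]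
  gcongr
  refine (norm_sum_le _ _).trans_eq (sum_congr rfl fun j _ => ?_)
  rw [norm_mul, AddChar.norm_apply, one_mul, norm_pow]

end Fourier

/-- **Binomial probabilities along a dilated residue class.**  There is an absolute
constant `C > 0` such that for all integers `n ≥ 1` and `c, d ≥ 1` with
`gcd(c,d) = 1`, every `r ∈ ℤ` and every `α ∈ (0,1)`, the sum of
`C(n,l)α^l(1−α)^{n−l}` over `0 ≤ l ≤ n` with `l·c ≡ r (mod d)` differs from `1/d` by
at most `C/(√(α(1−α))·√n)`. -/
theorem binomial_probabilities_dilated_residue_class :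
    ∃ C : ℝ, 0 < C ∧
      ∀ (n c d : ℕ), 1 ≤ n → 1 ≤ c → 1 ≤ d → Nat.gcd c d = 1 →
      ∀ (r : ℤ), ∀ (α : ℝ), 0 < α → α < 1 →
        |(∑ l ∈ (Finset.range (n + 1)).filter
              (fun l : ℕ => Int.ModEq (d : ℤ) ((l : ℤ) * (c : ℤ)) r),
            (n.choose l : ℝ) * α ^ l * (1 - α) ^ (n - l)) - 1 / (d : ℝ)|
          ≤ C / (Real.sqrt (α * (1 - α)) * Real.sqrt n) := by
  refine ⟨1, one_pos, fun n c d hn _ hd hcd r α hα₀ hα₁ => ?_⟩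
  have : NeZero d := ⟨by omega⟩
  have hγ : 0 < α * (1 - α) := mul_pos hα₀ (by linarith)
  have hd₀ : (0 : ℝ) < d := by exact_mod_cast hd
  set a : ℝ := 8 * (α * (1 - α)) * n / d ^ 2
  have hda : d * √a = √8 * (√(α * (1 - α)) * √n) := by
    rw [← sqrt_mul hγ.le, ← sqrt_mul (by norm_num), ← sqrt_sq hd₀.le, ← sqrt_mul (by positivity)]
    congr 1
    simp only [a]
    field_simp
  have he : exp 1 ≤ √8 := le_sqrt_of_sq_le (by nlinarith [exp_one_lt_d9, exp_pos 1])
  calc _ ≤ (d : ℝ)⁻¹ * ∑ x ∈ univ.erase 0, ‖(α : ℂ) * ZMod.stdAddChar x + (1 - α)‖ ^ n :=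
        abs_sum_filter_binomial_sub_le (ZMod.isPrimitive_stdAddChar d) n hcd r α
    _ ≤ (d : ℝ)⁻¹ * ∑ x ∈ univ.erase (0 : ZMod d), exp (-(a * (x.valMinAbs : ℝ) ^ 2)) := by
        gcongr with x
        exact ZMod.norm_ofReal_mul_stdAddChar_add_one_sub_pow_le hγ.le n x
    _ ≤ (d : ℝ)⁻¹ * (2 * (exp 1 / (2 * √a))) := by
        have ha : 0 < a := by simp only [a]; positivity
        grw [ZMod.sum_erase_zero_exp_neg_mul_valMinAbs_sq_le, sum_Ico_exp_neg_mul_sq_le ha]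
    _ = exp 1 / (√8 * (√(α * (1 - α)) * √n)) := by
        rw [← hda]
        field_simp
    _ ≤ √8 / (√8 * (√(α * (1 - α)) * √n)) := by gcongr
    _ = 1 / (√(α * (1 - α)) * √n) := by field_simp
end

section
/- For all integers a₀, b₀, r₀, u₀ ≥ 1, the quantity Δ(a₀,b₀;r₀,u₀) = Σ_{d ≥ 1, gcd(d,r₀) | a₀ and gcd(d,u₀) | b₀} (μ(d)/d²)·gcd(d,r₀)·gcd(d,u₀) admits the product representation Δ(a₀,b₀;r₀,u₀) = δ · ∏_{p ∈ H} (1 − 1/p) · ∏_{p prime, p ∤ lcm(r₀,u₀)} (1 − 1/p²), where δ = 1 if gcd(a₀,b₀,r₀,u₀) = 1 and δ = 0 otherwise, and H is the set of primes p such that either (p | r₀ and p ∤ u₀ and p | a₀) or (p | u₀ and p ∤ r₀ and p | b₀). -/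
open Finset

/-!
The summand `f(d)` is multiplicative in `d`, vanishes unless `d` is squarefree, and is bounded by
`r₀u₀/d²`, so the series is the Euler product `∏ₚ (1 + f(p))`. For `p ∤ r₀u₀` the local factor is
`1 - 1/p²`; if `p` divides exactly one of `r₀, u₀` it is `1 - 1/p` for `p ∈ H` and `1` otherwise;
if `p` divides both, it is `0` when moreover `p ∣ a₀, b₀` (this produces `δ`) and `1` otherwise.
-/

lemma Nat.Coprime.mul_gcd_dvd_iff {m n : ℕ} (hmn : m.Coprime n) (k c : ℕ) :
    (m * n).gcd k ∣ c ↔ m.gcd k ∣ c ∧ n.gcd k ∣ c := by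
  rw [hmn.mul_gcd]
  refine ⟨fun h => ⟨(Nat.dvd_mul_right _ _).trans h, (Nat.dvd_mul_left _ _).trans h⟩,
    fun h => Nat.Coprime.mul_dvd_of_dvd_of_dvd ?_ h.1 h.2⟩
  exact (hmn.coprime_dvd_left (Nat.gcd_dvd_left m k)).coprime_dvd_right (Nat.gcd_dvd_left n k)

namespace Delta

noncomputable def summand (a b r u d : ℕ) : ℝ :=
  if 1 ≤ d ∧ d.gcd r ∣ a ∧ d.gcd u ∣ b then
    (ArithmeticFunction.moebius d : ℝ) / (d : ℝ) ^ 2 * (d.gcd r : ℝ) * (d.gcd u : ℝ) else 0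

variable {a b r u : ℕ}

lemma summand_zero : summand a b r u 0 = 0 := by simp [summand]

lemma summand_one : summand a b r u 1 = 1 := by simp [summand]

lemma summand_mul {m n : ℕ} (hmn : m.Coprime n) :
    summand a b r u (m * n) = summand a b r u m * summand a b r u n := by
  rcases Nat.eq_zero_or_pos m with rfl | hm
  · simp [(Nat.coprime_zero_left n).mp hmn, summand_zero]
  rcases Nat.eq_zero_or_pos n with rfl | hn
  · simp [(Nat.coprime_zero_right m).mp hmn, summand_zero]
  have hmn' : 1 ≤ m * n := Nat.mul_pos hm hn
  simp only [summand, hmn.mul_gcd_dvd_iff, hmn', Nat.one_le_iff_ne_zero.mpr hm.ne',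
    Nat.one_le_iff_ne_zero.mpr hn.ne', true_and]
  by_cases hA : m.gcd r ∣ a ∧ m.gcd u ∣ b <;> by_cases hB : n.gcd r ∣ a ∧ n.gcd u ∣ b
  · rw [if_pos ⟨⟨hA.1, hB.1⟩, hA.2, hB.2⟩, if_pos hA, if_pos hB, hmn.mul_gcd,
      hmn.mul_gcd, ArithmeticFunction.isMultiplicative_moebius.map_mul_of_coprime hmn]
    push_cast
    ring
  all_goals
    rw [if_neg (by tauto)]
    simp [*]

lemma norm_summand_le (hr : 0 < r) (hu : 0 < u) (d : ℕ) :
    ‖summand a b r u d‖ ≤ (r * u : ℝ) * (1 / (d : ℝ) ^ 2) := by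
  unfold summand
  split_ifs
  · have hμ : |(ArithmeticFunction.moebius d : ℝ)| ≤ 1 := by
      exact_mod_cast ArithmeticFunction.abs_moebius_le_one
    have hgr : ((d.gcd r : ℕ) : ℝ) ≤ r := by
      exact_mod_cast Nat.le_of_dvd hr (Nat.gcd_dvd_right d r)
    have hgu : ((d.gcd u : ℕ) : ℝ) ≤ u := by
      exact_mod_cast Nat.le_of_dvd hu (Nat.gcd_dvd_right d u)
    rw [Real.norm_eq_abs, abs_mul, abs_mul, abs_div, abs_of_nonneg (by positivity : (0 : ℝ) ≤ d ^ 2),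
      Nat.abs_cast, Nat.abs_cast]
    calc |(ArithmeticFunction.moebius d : ℝ)| / (d : ℝ) ^ 2 * (d.gcd r : ℝ) * (d.gcd u : ℝ)
        ≤ 1 / (d : ℝ) ^ 2 * r * u := by gcongr
      _ = (r * u : ℝ) * (1 / (d : ℝ) ^ 2) := by ring
  · simp only [norm_zero]
    positivity

lemma summable_norm_summand (hr : 0 < r) (hu : 0 < u) :
    Summable (‖summand a b r u ·‖) :=
  ((Real.summable_one_div_nat_pow.mpr one_lt_two).mul_left _).of_nonneg_of_le
    (fun _ => norm_nonneg _) (norm_summand_le hr hu)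

lemma tsum_summand_prime_pow {p : ℕ} (hp : p.Prime) :
    ∑' e : ℕ, summand a b r u (p ^ e) = 1 + summand a b r u p := by
  rw [tsum_eq_sum (s := {0, 1}) fun e he => ?_]
  · simp [summand_one]
  have he : e ≠ 0 ∧ e ≠ 1 := by simpa using he
  simp [summand, ArithmeticFunction.moebius_apply_prime_pow hp he.1, he.2]

lemma one_add_summand_prime {p : ℕ} (hp : p.Prime) :
    1 + summand a b r u p =
      if p.gcd r ∣ a ∧ p.gcd u ∣ b then 1 - (p.gcd r * p.gcd u : ℝ) / (p : ℝ) ^ 2 else 1 := by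
  simp only [summand, hp.one_lt.le, true_and, ArithmeticFunction.moebius_apply_prime hp]
  split_ifs <;> push_cast <;> ring

lemma one_add_summand_of_not_dvd {p : ℕ} (hp : p.Prime) (hr : ¬ p ∣ r) (hu : ¬ p ∣ u) :
    1 + summand a b r u p = 1 - 1 / (p : ℝ) ^ 2 := by
  simp [one_add_summand_prime hp, hp.coprime_iff_not_dvd.mpr hr,
    hp.coprime_iff_not_dvd.mpr hu]

lemma one_add_summand_of_dvd_left {p : ℕ} (hp : p.Prime) (hr : p ∣ r) (hu : ¬ p ∣ u) :
    1 + summand a b r u p = if p ∣ a then 1 - 1 / (p : ℝ) else 1 := by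
  have hp0 : (p : ℝ) ≠ 0 := by exact_mod_cast hp.ne_zero
  rw [one_add_summand_prime hp, Nat.gcd_eq_left hr, hp.coprime_iff_not_dvd.mpr hu]
  simp only [one_dvd, and_true, Nat.cast_one, mul_one]
  split_ifs <;> field_simp

lemma one_add_summand_of_dvd_right {p : ℕ} (hp : p.Prime) (hr : ¬ p ∣ r) (hu : p ∣ u) :
    1 + summand a b r u p = if p ∣ b then 1 - 1 / (p : ℝ) else 1 := by
  have hp0 : (p : ℝ) ≠ 0 := by exact_mod_cast hp.ne_zero
  rw [one_add_summand_prime hp, Nat.gcd_eq_left hu, hp.coprime_iff_not_dvd.mpr hr]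
  simp only [one_dvd, true_and, Nat.cast_one, one_mul]
  split_ifs <;> field_simp

lemma one_add_summand_of_dvd_of_dvd {p : ℕ} (hp : p.Prime) (hr : p ∣ r) (hu : p ∣ u) :
    1 + summand a b r u p = if p ∣ a ∧ p ∣ b then 0 else 1 := by
  have hp0 : (p : ℝ) ≠ 0 := by exact_mod_cast hp.ne_zero
  rw [one_add_summand_prime hp, Nat.gcd_eq_left hr, Nat.gcd_eq_left hu]
  split_ifs
  · rw [← sq, div_self (pow_ne_zero 2 hp0), sub_self]
  · rfl

lemma prod_primeFactors_one_add_summand (hr : 0 < r) (hu : 0 < u) :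
    ∏ p ∈ (r * u).primeFactors, (1 + summand a b r u p) =
      (if (a.gcd b).gcd (r.gcd u) = 1 then 1 else 0) *
        ∏ p ∈ (r * u).divisors.filter (fun p => p.Prime ∧
            ((p ∣ r ∧ ¬ p ∣ u ∧ p ∣ a) ∨ (p ∣ u ∧ ¬ p ∣ r ∧ p ∣ b))), (1 - 1 / (p : ℝ)) := by
  have hru : r * u ≠ 0 := (Nat.mul_pos hr hu).ne'
  have hdvd_gcd {p : ℕ} : p ∣ (a.gcd b).gcd (r.gcd u) ↔ p ∣ a ∧ p ∣ b ∧ p ∣ r ∧ p ∣ u := by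
    simp only [Nat.dvd_gcd_iff, and_assoc]
  by_cases hδ : (a.gcd b).gcd (r.gcd u) = 1
  · have hH : (r * u).divisors.filter (fun p => p.Prime ∧
          ((p ∣ r ∧ ¬ p ∣ u ∧ p ∣ a) ∨ (p ∣ u ∧ ¬ p ∣ r ∧ p ∣ b))) =
        (r * u).primeFactors.filter (fun p =>
          (p ∣ r ∧ ¬ p ∣ u ∧ p ∣ a) ∨ (p ∣ u ∧ ¬ p ∣ r ∧ p ∣ b)) := by
      ext p
      simp only [mem_filter, Nat.mem_divisors, Nat.mem_primeFactors]
      tauto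
    rw [if_pos hδ, one_mul, hH, prod_filter]
    refine prod_congr rfl fun p hp => ?_
    obtain ⟨hp, hpru, -⟩ := Nat.mem_primeFactors.mp hp
    by_cases hpr : p ∣ r <;> by_cases hpu : p ∣ u
    · have hab : ¬ (p ∣ a ∧ p ∣ b) := fun hab =>
        hp.not_dvd_one (hδ ▸ hdvd_gcd.mpr ⟨hab.1, hab.2, hpr, hpu⟩)
      simp [one_add_summand_of_dvd_of_dvd hp hpr hpu, hab, hpr, hpu]
    · simp [one_add_summand_of_dvd_left hp hpr hpu, hpr, hpu]
    · simp [one_add_summand_of_dvd_right hp hpr hpu, hpr, hpu]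
    · exact absurd ((Nat.Prime.dvd_mul hp).mp hpru) (by tauto)
  · obtain ⟨p, hp, hpδ⟩ := Nat.exists_prime_and_dvd hδ
    obtain ⟨hpa, hpb, hpr, hpu⟩ := hdvd_gcd.mp hpδ
    rw [if_neg hδ, zero_mul]
    refine prod_eq_zero (Nat.mem_primeFactors.mpr ⟨hp, dvd_mul_of_dvd_left hpr u, hru⟩) ?_
    rw [one_add_summand_of_dvd_of_dvd hp hpr hpu, if_pos ⟨hpa, hpb⟩]

lemma hasProd_mulIndicator_primes_one_add_summand (hr : 0 < r) (hu : 0 < u) :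
    HasProd ({p | p.Prime}.mulIndicator fun p => 1 + summand a b r u p)
      (∑' d, summand a b r u d) := by
  have h := EulerProduct.eulerProduct_hasProd_mulIndicator summand_one summand_mul
    (summable_norm_summand (a := a) (b := b) hr hu) summand_zero
  rwa [Set.mulIndicator_congr (s := {p : ℕ | p.Prime}) fun p (hp : p.Prime) =>
    tsum_summand_prime_pow hp] at h

lemma mulIndicator_primes_one_add_summand (hr : 0 < r) (hu : 0 < u) :
    {p | p.Prime}.mulIndicator (fun p => 1 + summand a b r u p) =
      (↑(r * u).primeFactors : Set ℕ).mulIndicator (fun p => 1 + summand a b r u p) *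
        {p | p.Prime ∧ ¬ p ∣ r.lcm u}.mulIndicator (fun p => 1 - 1 / (p : ℝ) ^ 2) := by
  ext p
  by_cases hp : p.Prime
  · have hru : r * u ≠ 0 := (Nat.mul_pos hr hu).ne'
    by_cases hpru : p ∣ r * u
    · have hpl : p ∣ r.lcm u := by rwa [hp.dvd_lcm, ← hp.dvd_mul]
      simp [hp, hpru, hpl, hru]
    · have hpl : ¬ p ∣ r.lcm u := by rwa [hp.dvd_lcm, ← hp.dvd_mul]
      obtain ⟨hpr, hpu⟩ := not_or.mp (hp.dvd_mul.not.mp hpru)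
      simp [hp, hpru, hpl, one_add_summand_of_not_dvd hp hpr hpu]
  · simp [hp]

lemma multipliable_one_sub_one_div_sq (P : ℕ → Prop) :
    Multipliable fun p : {p : ℕ // P p} => 1 - 1 / ((p : ℕ) : ℝ) ^ 2 := by
  simp_rw [sub_eq_add_neg]
  refine multipliable_one_add_of_summable ?_
  exact ((Real.summable_one_div_nat_pow.mpr one_lt_two).comp_injective
    Subtype.val_injective).congr fun p => by simp

end Delta

theorem Delta_product_representation_general
    (a0 b0 r0 u0 : ℕ) (hr : 1 ≤ r0) (hu : 1 ≤ u0) :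
    (∑' d : ℕ, if 1 ≤ d ∧ Nat.gcd d r0 ∣ a0 ∧ Nat.gcd d u0 ∣ b0 then
        (ArithmeticFunction.moebius d : ℝ) / (d : ℝ) ^ 2 *
          (Nat.gcd d r0 : ℝ) * (Nat.gcd d u0 : ℝ) else 0) =
      (if Nat.gcd (Nat.gcd a0 b0) (Nat.gcd r0 u0) = 1 then (1 : ℝ) else 0) *
        (∏ p ∈ (r0 * u0).divisors.filter (fun p => p.Prime ∧
            ((p ∣ r0 ∧ ¬ p ∣ u0 ∧ p ∣ a0) ∨ (p ∣ u0 ∧ ¬ p ∣ r0 ∧ p ∣ b0))),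
          (1 - 1 / (p : ℝ))) *
        (∏' p : {p : ℕ // p.Prime ∧ ¬ p ∣ Nat.lcm r0 u0},
          (1 - 1 / ((p : ℕ) : ℝ) ^ 2)) := by
  have hfinite := hasProd_subtype_iff_mulIndicator.mp
    ((r0 * u0).primeFactors.hasProd fun p => 1 + Delta.summand a0 b0 r0 u0 p)
  have hcofinite : HasProd ({p | p.Prime ∧ ¬ p ∣ r0.lcm u0}.mulIndicator
      fun p => 1 - 1 / (p : ℝ) ^ 2)
      (∏' p : {p : ℕ // p.Prime ∧ ¬ p ∣ Nat.lcm r0 u0}, (1 - 1 / ((p : ℕ) : ℝ) ^ 2)) :=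
    hasProd_subtype_iff_mulIndicator.mp
      (Delta.multipliable_one_sub_one_div_sq fun p => p.Prime ∧ ¬ p ∣ r0.lcm u0).hasProd
  have heuler := Delta.hasProd_mulIndicator_primes_one_add_summand (a := a0) (b := b0) hr hu
  rw [Delta.mulIndicator_primes_one_add_summand hr hu] at heuler
  rw [← Delta.prod_primeFactors_one_add_summand hr hu]
  exact heuler.unique (hfinite.mul hcofinite)

/-- **Product representation of `Δ(a₀,b₀;r₀,u₀)`.**  For all integers
`a₀, b₀, r₀, u₀ ≥ 1`,
`Δ(a₀,b₀;r₀,u₀) = ∑_{d ≥ 1, gcd(d,r₀) ∣ a₀, gcd(d,u₀) ∣ b₀} (μ(d)/d²)·gcd(d,r₀)·gcd(d,u₀)`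
equals `δ · ∏_{p ∈ H} (1 − 1/p) · ∏_{p prime, p ∤ lcm(r₀,u₀)} (1 − 1/p²)`, where
`δ = 1` if `gcd(a₀,b₀,r₀,u₀) = 1` and `δ = 0` otherwise, and `H` is the set of primes
`p` with either (`p ∣ r₀`, `p ∤ u₀` and `p ∣ a₀`) or (`p ∣ u₀`, `p ∤ r₀` and `p ∣ b₀`). -/
theorem Delta_product_representation
    (a0 b0 r0 u0 : ℕ) (ha : 1 ≤ a0) (hb : 1 ≤ b0) (hr : 1 ≤ r0) (hu : 1 ≤ u0) :
    (∑' d : ℕ, if 1 ≤ d ∧ Nat.gcd d r0 ∣ a0 ∧ Nat.gcd d u0 ∣ b0 then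
        (ArithmeticFunction.moebius d : ℝ) / (d : ℝ) ^ 2 *
          (Nat.gcd d r0 : ℝ) * (Nat.gcd d u0 : ℝ) else 0) =
      (if Nat.gcd (Nat.gcd a0 b0) (Nat.gcd r0 u0) = 1 then (1 : ℝ) else 0) *
        (∏ p ∈ (r0 * u0).divisors.filter (fun p => p.Prime ∧
            ((p ∣ r0 ∧ ¬ p ∣ u0 ∧ p ∣ a0) ∨ (p ∣ u0 ∧ ¬ p ∣ r0 ∧ p ∣ b0))),
          (1 - 1 / (p : ℝ))) *
        (∏' p : {p : ℕ // p.Prime ∧ ¬ p ∣ Nat.lcm r0 u0},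
          (1 - 1 / ((p : ℕ) : ℝ) ^ 2)) :=
  Delta_product_representation_general a0 b0 r0 u0 hr hu
end
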